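/- arXiv:1310.1368 — 9 statements merged into one kernel-verified Lean document; each statement's English description precedes it below -/
import Mathlib

section
/- For every real number c with 0 < c < √2 there exists N such that for every integer n ≥ N, every n-uniform hypergraph with at most c·√(n/ln n)·2^(n−1) edges is 2-colorable. -/
/-- An `n`-uniform hypergraph given by its edge set `E` (a finite family of
`n`-element finite subsets of the vertex set `V`) is `r`-colorable if there is a
coloring of the vertices with `r` colors under which no edge is monochromatic. -/
def IsRColorable {V : Type*} (r : ℕ) (E : Finset (Finset V)) : Prop :=
  ∃ c : V → Fin r, ∀ e ∈ E, ∃ u ∈ e, ∃ v ∈ e, c u ≠ c v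

/-!
Random greedy colouring. Give every vertex an independent uniform arrival time in `[0, 1]` and
put `p = α log n / n`. Vertices arriving before `(1 - p) / 2` are blue, those arriving after
`(1 + p) / 2` are red, and a vertex of the middle window is red exactly when it is the last vertex
of some edge. An edge can then only be blue if it lies entirely before the window, red if it lies
entirely after it, or if its first vertex lies in the window and is the last vertex of another
edge meeting it only there; the last event has probability at most `p / 4 ^ (n - 1)`, the
maximum of `(t (1 - t)) ^ (n - 1)` times the width of the window. For `m` edges the union bound
is `m (2 ((1 - p) / 2) ^ n + m p / 4 ^ (n - 1))`, and for `m ≤ c √(n / log n) 2 ^ (n - 1)` and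
`α = 1/4 + 1/(2c²)` it is at most `c n ^ (1/2 - α) + c² α`, which tends to `c²/4 + 1/2 < 1`.
-/

open MeasureTheory Set Filter Topology
open scoped ENNReal

namespace RandomGreedy

lemma exists_lt_mem_Icc_add_mul {a δ x : ℝ} {K : ℕ} (hK : K ≠ 0) (hx : x ∈ Icc a (a + K * δ)) :
    ∃ i < K, x ∈ Icc (a + i * δ) (a + i * δ + δ) := by
  induction K with
  | zero => exact absurd rfl hK
  | succ K ih =>
    by_cases hxK : K ≠ 0 ∧ x ≤ a + K * δ
    · obtain ⟨i, hi, hxi⟩ := ih hxK.1 ⟨hx.1, hxK.2⟩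
      exact ⟨i, hi.trans K.lt_succ_self, hxi⟩
    · refine ⟨K, K.lt_succ_self, ?_, by push_cast at hx; linarith [hx.2]⟩
      rcases not_and_or.1 hxK with hK0 | hlt
      · simpa [not_not.1 hK0] using hx.1
      · exact (not_le.1 hlt).le

variable {V : Type*}

section Events

variable [DecidableEq V]

def AllBelow (e : Finset V) (b : ℝ) : Set (V → ℝ) := (e : Set V).pi fun _ => Iic b

def AllAbove (e : Finset V) (a : ℝ) : Set (V → ℝ) := (e : Set V).pi fun _ => Ici a

def Conflict (p : ℝ) (e f : Finset V) : Set (V → ℝ) :=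
  {x | ∃ u, e ∩ f = {u} ∧ x u ∈ Icc ((1 - p) / 2) ((1 + p) / 2) ∧
    (∀ w ∈ e, x w ≤ x u) ∧ ∀ w ∈ f, x u ≤ x w}

def badSet (E : Finset (Finset V)) (p : ℝ) : Set (V → ℝ) :=
  ⋃ e ∈ E, (AllBelow e ((1 - p) / 2) ∪ AllAbove e ((1 + p) / 2) ∪ ⋃ f ∈ E, Conflict p e f)

/-- Cutting the window into slabs bounds the probability of a `Conflict` by a Riemann sum of
`(t (1 - t)) ^ (n - 1)`, with no integration. -/
def slab (e f : Finset V) (u : V) (a δ : ℝ) : Set (V → ℝ) :=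
  (↑(e ∪ f) : Set V).pi fun v =>
    if v = u then Icc a (a + δ) else if v ∈ e then Iic (a + δ) else Ici a

lemma conflict_subset_iUnion_slab {p : ℝ} {e f : Finset V} {u : V} (hu : e ∩ f = {u}) {K : ℕ}
    (hK : K ≠ 0) :
    Conflict p e f ⊆ ⋃ i ∈ Finset.range K, slab e f u ((1 - p) / 2 + i * (p / K)) (p / K) := by
  rintro x ⟨u', hu', hxu, hmax, hmin⟩
  obtain rfl : u' = u := Finset.singleton_injective (hu'.symm.trans hu)
  have hend : (1 - p) / 2 + K * (p / K) = (1 + p) / 2 := by field_simp; ring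
  obtain ⟨i, hi, hlo, hhi⟩ := exists_lt_mem_Icc_add_mul hK (hend ▸ hxu)
  refine mem_biUnion (Finset.mem_range.2 hi) fun v hv => ?_
  dsimp only
  split_ifs with hvu hve
  · exact hvu ▸ ⟨hlo, hhi⟩
  · exact (hmax v hve).trans hhi
  · exact hlo.trans (hmin v ((Finset.mem_union.1 hv).resolve_left hve))

end Events

/-- Equal arrival times are broken by the order of `V`, so that every edge has a unique first and
last vertex. -/
def arrival (σ : V → ℝ) (v : V) : ℝ ×ₗ V := toLex (σ v, v)

lemma arrival_injective (σ : V → ℝ) : Function.Injective (arrival σ) :=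
  fun _ _ h => congrArg Prod.snd (toLex.injective h)

section Coloring

variable [LinearOrder V]

lemma le_of_arrival_le {σ : V → ℝ} {v w : V} (h : arrival σ v ≤ arrival σ w) : σ v ≤ σ w :=
  Prod.Lex.monotone_fst _ _ h

def IsLast (E : Finset (Finset V)) (σ : V → ℝ) (v : V) : Prop :=
  ∃ e ∈ E, v ∈ e ∧ ∀ w ∈ e, arrival σ w ≤ arrival σ v

def IsBlue (E : Finset (Finset V)) (p : ℝ) (σ : V → ℝ) (v : V) : Prop :=
  σ v < (1 - p) / 2 ∨ (σ v ≤ (1 + p) / 2 ∧ ¬ IsLast E σ v)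

open Classical in
noncomputable def greedyColoring (E : Finset (Finset V)) (p : ℝ) (σ : V → ℝ) (v : V) : Fin 2 :=
  if IsBlue E p σ v then 0 else 1

variable {E : Finset (Finset V)} {p : ℝ} {σ : V → ℝ} {e : Finset V}

lemma not_isBlue_of_forall_arrival_le {v : V} (he : e ∈ E) (hσ : σ ∉ AllBelow e ((1 - p) / 2))
    (hv : v ∈ e) (hmax : ∀ w ∈ e, arrival σ w ≤ arrival σ v) : ¬ IsBlue E p σ v := by
  rintro (hlow | ⟨-, hnot⟩)
  · exact hσ fun w hw => (le_of_arrival_le (hmax w hw)).trans hlow.le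
  · exact hnot ⟨e, he, hv, hmax⟩

lemma isBlue_of_forall_le_arrival {u : V} (hσ : σ ∉ AllAbove e ((1 + p) / 2))
    (hconf : ∀ e' ∈ E, σ ∉ Conflict p e' e)
    (hu : u ∈ e) (hmin : ∀ w ∈ e, arrival σ u ≤ arrival σ w) : IsBlue E p σ u := by
  by_contra hred
  simp only [IsBlue, not_or, not_lt, not_and, not_not] at hred
  obtain ⟨hmid, hlast⟩ := hred
  by_cases hhigh : σ u ≤ (1 + p) / 2
  · obtain ⟨e', he', hue', hmax⟩ := hlast hhigh
    have hinter : e' ∩ e = {u} := by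
      refine Finset.eq_singleton_iff_unique_mem.2 ⟨Finset.mem_inter.2 ⟨hue', hu⟩, fun z hz => ?_⟩
      rw [Finset.mem_inter] at hz
      exact arrival_injective σ ((hmax z hz.1).antisymm (hmin z hz.2))
    exact hconf e' he' ⟨u, hinter, ⟨hmid, hhigh⟩, fun w hw => le_of_arrival_le (hmax w hw),
      fun w hw => le_of_arrival_le (hmin w hw)⟩
  · exact hσ fun w hw => (not_le.1 hhigh).le.trans (le_of_arrival_le (hmin w hw))

lemma isRColorable_of_not_mem_badSet (hσ : σ ∉ badSet E p) : IsRColorable 2 E := by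
  refine ⟨greedyColoring E p σ, fun e he => ?_⟩
  simp only [badSet, mem_iUnion, mem_union, not_exists, not_or] at hσ
  obtain ⟨⟨hbelow, habove⟩, -⟩ := hσ e he
  have hne : e.Nonempty := by
    by_contra hempty
    exact hbelow (by simp [AllBelow, Finset.not_nonempty_iff_eq_empty.1 hempty])
  obtain ⟨u, hu, hmin⟩ := e.exists_min_image (arrival σ) hne
  obtain ⟨v, hv, hmax⟩ := e.exists_max_image (arrival σ) hne
  have hblue := isBlue_of_forall_le_arrival habove (fun e' he' => (hσ e' he').2 e he) hu hmin
  refine ⟨u, hu, v, hv, ?_⟩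
  simp [greedyColoring, hblue, not_isBlue_of_forall_arrival_le he hbelow hv hmax]

end Coloring

noncomputable def unitUniform : Measure ℝ := volume.restrict (Icc 0 1)

instance : IsProbabilityMeasure unitUniform := ⟨by simp [unitUniform]⟩

lemma unitUniform_Icc_le (a b : ℝ) : unitUniform (Icc a b) ≤ ENNReal.ofReal (b - a) :=
  (Measure.restrict_le_self _).trans_eq Real.volume_Icc

lemma unitUniform_Iic_le (b : ℝ) : unitUniform (Iic b) ≤ ENNReal.ofReal b := by
  rw [unitUniform, Measure.restrict_apply measurableSet_Iic]
  calc volume (Iic b ∩ Icc 0 1) ≤ volume (Icc 0 b) :=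
        measure_mono fun x ⟨hxb, hx0, _⟩ => ⟨hx0, hxb⟩
    _ = ENNReal.ofReal b := by rw [Real.volume_Icc, sub_zero]

lemma unitUniform_Ici_le (a : ℝ) : unitUniform (Ici a) ≤ ENNReal.ofReal (1 - a) := by
  rw [unitUniform, Measure.restrict_apply measurableSet_Ici, ← Real.volume_Icc]
  exact measure_mono fun x ⟨hax, _, hx1⟩ => ⟨hax, hx1⟩

section Measure

noncomputable def uniformPi (V : Type*) [Fintype V] : Measure (V → ℝ) :=
  Measure.pi fun _ => unitUniform

variable [Fintype V]

instance : IsProbabilityMeasure (uniformPi V) := by unfold uniformPi; infer_instance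

lemma uniformPi_pi_le (s : Finset V) (T : V → Set ℝ) (b : ℝ≥0∞)
    (hT : ∀ v ∈ s, unitUniform (T v) ≤ b) : uniformPi V ((s : Set V).pi T) ≤ b ^ s.card := by
  rw [uniformPi, Measure.pi_pi_finset]
  exact Finset.prod_le_pow_card _ _ _ hT

variable [DecidableEq V]

lemma uniformPi_slab_le {e f : Finset V} {u : V} {n : ℕ} (hu : e ∩ f = {u})
    (he : e.card = n) (hf : f.card = n) {a δ : ℝ} (ha0 : 0 ≤ a) (ha1 : a ≤ 1) (hδ : 0 ≤ δ) :
    uniformPi V (slab e f u a δ) ≤ ENNReal.ofReal (δ * (1 / 4 + δ) ^ (n - 1)) := by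
  have hue : u ∈ e := Finset.mem_of_mem_inter_left (hu ▸ Finset.mem_singleton_self u)
  have huf : u ∈ f := Finset.mem_of_mem_inter_right (hu ▸ Finset.mem_singleton_self u)
  have hnot_e : ∀ v ∈ f.erase u, v ∉ e := fun v hv hve => Finset.ne_of_mem_erase hv
    (Finset.mem_singleton.1 (hu ▸ Finset.mem_inter.2 ⟨hve, Finset.mem_of_mem_erase hv⟩))
  have hunion : e ∪ f = e ∪ f.erase u := by
    ext v; by_cases hv : v = u <;> simp [hv, hue]
  have hprod : uniformPi V (slab e f u a δ) ≤
      ENNReal.ofReal δ * ENNReal.ofReal (a + δ) ^ (e.card - 1) *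
        ENNReal.ofReal (1 - a) ^ (f.card - 1) := by
    rw [uniformPi, slab, Measure.pi_pi_finset, hunion,
      Finset.prod_union (Finset.disjoint_right.2 hnot_e), ← Finset.mul_prod_erase e _ hue,
      ← Finset.card_erase_of_mem hue, ← Finset.card_erase_of_mem huf]
    gcongr ?_ * ?_ * ?_
    · simpa using unitUniform_Icc_le a (a + δ)
    · refine Finset.prod_le_pow_card _ _ _ fun v hv => ?_
      simpa [Finset.ne_of_mem_erase hv, Finset.mem_of_mem_erase hv] using unitUniform_Iic_le _
    · refine Finset.prod_le_pow_card _ _ _ fun v hv => ?_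
      simpa [Finset.ne_of_mem_erase hv, hnot_e v hv] using unitUniform_Ici_le _
  rw [he, hf] at hprod
  refine hprod.trans ?_
  have hab : 0 ≤ (a + δ) * (1 - a) := by nlinarith
  have hquarter : (a + δ) * (1 - a) ≤ 1 / 4 + δ := by nlinarith [sq_nonneg (a - 1 / 2)]
  rw [mul_assoc, ← ENNReal.ofReal_pow (by linarith), ← ENNReal.ofReal_pow (by linarith),
    ← ENNReal.ofReal_mul (by positivity), ← ENNReal.ofReal_mul hδ, ← mul_pow]
  gcongr

lemma uniformPi_conflict_le_of_ne_zero {p : ℝ} {e f : Finset V} {n K : ℕ} (he : e.card = n)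
    (hf : f.card = n) (hp0 : 0 ≤ p) (hp1 : p ≤ 1) (hK : K ≠ 0) :
    uniformPi V (Conflict p e f) ≤ ENNReal.ofReal (p * (1 / 4 + p / K) ^ (n - 1)) := by
  by_cases h : ∃ u, e ∩ f = {u}
  swap
  · have hempty : Conflict p e f = ∅ := eq_empty_of_forall_notMem fun x ⟨u, hu, _⟩ => h ⟨u, hu⟩
    simp [hempty]
  obtain ⟨u, hu⟩ := h
  have hKpos : (0 : ℝ) < K := by positivity
  have hstep : ∀ i ∈ Finset.range K,
      uniformPi V (slab e f u ((1 - p) / 2 + i * (p / K)) (p / K)) ≤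
        ENNReal.ofReal (p / K * (1 / 4 + p / K) ^ (n - 1)) := fun i hi => by
    have hiK : (i : ℝ) * (p / K) ≤ p := by
      calc (i : ℝ) * (p / K) ≤ K * (p / K) := by gcongr; exact_mod_cast (Finset.mem_range.1 hi).le
        _ = p := by field_simp
    exact uniformPi_slab_le hu he hf (by positivity) (by linarith) (by positivity)
  calc uniformPi V (Conflict p e f)
      ≤ ∑ i ∈ Finset.range K, uniformPi V (slab e f u ((1 - p) / 2 + i * (p / K)) (p / K)) :=
        (measure_mono (conflict_subset_iUnion_slab hu hK)).trans (measure_biUnion_finset_le _ _)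
    _ ≤ ∑ i ∈ Finset.range K, ENNReal.ofReal (p / K * (1 / 4 + p / K) ^ (n - 1)) :=
        Finset.sum_le_sum hstep
    _ = ENNReal.ofReal (p * (1 / 4 + p / K) ^ (n - 1)) := by
        rw [Finset.sum_const, Finset.card_range, nsmul_eq_mul, ← ENNReal.ofReal_natCast,
          ← ENNReal.ofReal_mul K.cast_nonneg, ← mul_assoc, mul_div_cancel₀ _ hKpos.ne']

lemma uniformPi_conflict_le {p : ℝ} {e f : Finset V} {n : ℕ} (he : e.card = n)
    (hf : f.card = n) (hp0 : 0 ≤ p) (hp1 : p ≤ 1) :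
    uniformPi V (Conflict p e f) ≤ ENNReal.ofReal (p / 4 ^ (n - 1)) := by
  have hlim : Tendsto (fun K : ℕ => ENNReal.ofReal (p * (1 / 4 + p / K) ^ (n - 1))) atTop
      (𝓝 (ENNReal.ofReal (p / 4 ^ (n - 1)))) := by
    refine ENNReal.tendsto_ofReal ?_
    have h :=
      (((tendsto_const_div_atTop_nhds_zero_nat p).const_add (1 / 4)).pow (n - 1)).const_mul p
    simpa [div_eq_mul_inv, inv_pow] using h
  exact ge_of_tendsto hlim (eventually_atTop.2
    ⟨1, fun K hK => uniformPi_conflict_le_of_ne_zero he hf hp0 hp1 (by omega)⟩)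

noncomputable def unionBound (n : ℕ) (p m : ℝ) : ℝ :=
  m * (2 * ((1 - p) / 2) ^ n + m * (p / 4 ^ (n - 1)))

lemma uniformPi_badSet_le {E : Finset (Finset V)} {n : ℕ} (hcard : ∀ e ∈ E, e.card = n) {p : ℝ}
    (hp0 : 0 ≤ p) (hp1 : p ≤ 1) :
    uniformPi V (badSet E p) ≤ ENNReal.ofReal (unionBound n p E.card) := by
  have hq : 0 ≤ (1 - p) / 2 := by linarith
  have hqn : 0 ≤ ((1 - p) / 2) ^ n := pow_nonneg hq n
  have hedge : ∀ e ∈ E, uniformPi V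
      (AllBelow e ((1 - p) / 2) ∪ AllAbove e ((1 + p) / 2) ∪ ⋃ f ∈ E, Conflict p e f) ≤
        ENNReal.ofReal (2 * ((1 - p) / 2) ^ n + E.card * (p / 4 ^ (n - 1))) := by
    intro e he
    have hbelow : uniformPi V (AllBelow e ((1 - p) / 2)) ≤ ENNReal.ofReal (((1 - p) / 2) ^ n) := by
      rw [ENNReal.ofReal_pow hq, ← hcard e he]
      exact uniformPi_pi_le _ _ _ fun _ _ => unitUniform_Iic_le _
    have habove : uniformPi V (AllAbove e ((1 + p) / 2)) ≤ ENNReal.ofReal (((1 - p) / 2) ^ n) := by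
      rw [ENNReal.ofReal_pow hq, ← hcard e he, show (1 - p) / 2 = 1 - (1 + p) / 2 by ring]
      exact uniformPi_pi_le _ _ _ fun _ _ => unitUniform_Ici_le _
    have hconf : uniformPi V (⋃ f ∈ E, Conflict p e f) ≤
        ENNReal.ofReal (E.card * (p / 4 ^ (n - 1))) := by
      refine (measure_biUnion_finset_le _ _).trans <| (Finset.sum_le_sum fun f hf =>
        uniformPi_conflict_le (hcard e he) (hcard f hf) hp0 hp1).trans_eq ?_
      rw [Finset.sum_const, nsmul_eq_mul, ← ENNReal.ofReal_natCast,
        ← ENNReal.ofReal_mul (Nat.cast_nonneg _)]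
    calc _ ≤ uniformPi V (AllBelow e ((1 - p) / 2)) + uniformPi V (AllAbove e ((1 + p) / 2)) +
          uniformPi V (⋃ f ∈ E, Conflict p e f) :=
          (measure_union_le _ _).trans (by gcongr; exact measure_union_le _ _)
      _ ≤ ENNReal.ofReal (((1 - p) / 2) ^ n) + ENNReal.ofReal (((1 - p) / 2) ^ n) +
          ENNReal.ofReal (E.card * (p / 4 ^ (n - 1))) := by gcongr
      _ = _ := by
          rw [← ENNReal.ofReal_add hqn hqn, ← ENNReal.ofReal_add (by positivity) (by positivity),
            two_mul]
  calc uniformPi V (badSet E p) ≤ ∑ e ∈ E, uniformPi V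
        (AllBelow e ((1 - p) / 2) ∪ AllAbove e ((1 + p) / 2) ∪ ⋃ f ∈ E, Conflict p e f) :=
        measure_biUnion_finset_le _ _
    _ ≤ ∑ e ∈ E, ENNReal.ofReal (2 * ((1 - p) / 2) ^ n + E.card * (p / 4 ^ (n - 1))) :=
        Finset.sum_le_sum hedge
    _ = ENNReal.ofReal (unionBound n p E.card) := by
        rw [Finset.sum_const, nsmul_eq_mul, ← ENNReal.ofReal_natCast,
          ← ENNReal.ofReal_mul (Nat.cast_nonneg _), unionBound]

end Measure

theorem isRColorable_two_of_unionBound_lt_one_of_fintype [Fintype V] [LinearOrder V]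
    {E : Finset (Finset V)} {n : ℕ} (hcard : ∀ e ∈ E, e.card = n) {p : ℝ} (hp0 : 0 ≤ p)
    (hp1 : p ≤ 1) (h : unionBound n p E.card < 1) : IsRColorable 2 E := by
  obtain ⟨σ, hσ⟩ : ∃ σ, σ ∉ badSet E p := by
    by_contra! hall
    have hlt := (uniformPi_badSet_le hcard hp0 hp1).trans_lt (ENNReal.ofReal_lt_one.2 h)
    rw [eq_univ_of_forall hall, measure_univ] at hlt
    exact lt_irrefl _ hlt
  exact isRColorable_of_not_mem_badSet hσ

lemma isRColorable_of_image_subtype [DecidableEq V] {r : ℕ} [NeZero r] {E : Finset (Finset V)}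
    (P : V → Prop) [DecidablePred P] (h : IsRColorable r (E.image (Finset.subtype P))) :
    IsRColorable r E := by
  obtain ⟨c, hc⟩ := h
  refine ⟨fun v => if hv : P v then c ⟨v, hv⟩ else 0, fun e he => ?_⟩
  obtain ⟨u, hu, v, hv, hne⟩ := hc _ (Finset.mem_image_of_mem _ he)
  rw [Finset.mem_subtype] at hu hv
  exact ⟨u, hu, v, hv, by simpa [u.2, v.2] using hne⟩

lemma unionBound_le_unionBound {n : ℕ} {p m m' : ℝ} (hp0 : 0 ≤ p) (hp1 : p ≤ 1) (hm : 0 ≤ m)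
    (hmm' : m ≤ m') : unionBound n p m ≤ unionBound n p m' := by
  have hq : 0 ≤ (1 - p) / 2 := by linarith
  unfold unionBound
  gcongr
  exact hm.trans hmm'

theorem isRColorable_two_of_unionBound_lt_one {E : Finset (Finset V)} {n : ℕ}
    (hcard : ∀ e ∈ E, e.card = n) {p : ℝ} (hp0 : 0 ≤ p) (hp1 : p ≤ 1)
    (h : unionBound n p E.card < 1) : IsRColorable 2 E := by
  classical
  set W := E.biUnion id
  let _ : LinearOrder W := LinearOrder.lift' _ (Fintype.equivFin W).injective
  refine isRColorable_of_image_subtype (· ∈ W)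
    (isRColorable_two_of_unionBound_lt_one_of_fintype (n := n) ?_ hp0 hp1 ?_)
  · simp only [Finset.forall_mem_image]
    intro e he
    have hsub : ∀ v ∈ e, v ∈ W := fun v hv => Finset.mem_biUnion.2 ⟨e, he, hv⟩
    rw [Finset.card_subtype, Finset.filter_true_of_mem hsub, hcard e he]
  · exact (unionBound_le_unionBound hp0 hp1 (Nat.cast_nonneg _)
      (Nat.cast_le.2 Finset.card_image_le)).trans_lt h

lemma unionBound_mul_two_pow (C p : ℝ) {n : ℕ} (hn : n ≠ 0) :
    unionBound n p (C * 2 ^ (n - 1)) = C * (1 - p) ^ n + C ^ 2 * p := by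
  obtain ⟨k, rfl⟩ : ∃ k, n = k + 1 := ⟨n - 1, by omega⟩
  rw [unionBound, Nat.add_sub_cancel, div_pow, pow_succ (2 : ℝ) k,
    show (4 : ℝ) ^ k = 2 ^ k * 2 ^ k by rw [← mul_pow]; norm_num]
  field_simp

lemma sqrt_div_log_mul_one_sub_pow_le {α : ℝ} {n : ℕ} (hn : 3 ≤ n)
    (hαn : α * Real.log n ≤ n) :
    √(n / Real.log n) * (1 - α * Real.log n / n) ^ n ≤ (n : ℝ) ^ (1 / 2 - α) := by
  have hn0 : (0 : ℝ) < n := by positivity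
  have hlog : 1 ≤ Real.log n := by
    rw [Real.le_log_iff_exp_le hn0]
    have h3 : (3 : ℝ) ≤ n := by exact_mod_cast hn
    linarith [Real.exp_one_lt_d9]
  have hp1 : α * Real.log n / n ≤ 1 := div_le_one_of_le₀ hαn hn0.le
  calc √(n / Real.log n) * (1 - α * Real.log n / n) ^ n
      ≤ √n * Real.exp (-(α * Real.log n)) := by
        have : 0 ≤ 1 - α * Real.log n / n := by linarith
        gcongr
        · exact div_le_self hn0.le hlog
        · exact Real.one_sub_div_pow_le_exp_neg hαn
    _ = (n : ℝ) ^ (1 / 2 - α) := by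
        rw [sub_eq_add_neg, Real.rpow_add hn0, ← Real.sqrt_eq_rpow, Real.rpow_def_of_pos hn0]
        ring_nf

lemma eventually_exists_unionBound_lt_one {c α : ℝ} (hc : 0 ≤ c) (hα : 1 / 2 < α)
    (hcα : c ^ 2 * α < 1) :
    ∀ᶠ n : ℕ in atTop, ∃ p ∈ Icc (0 : ℝ) 1, ∀ m : ℝ, 0 ≤ m →
      m ≤ c * √(n / Real.log n) * 2 ^ (n - 1) → unionBound n p m < 1 := by
  have hα0 : 0 < α := by linarith
  have hlog_le : ∀ᶠ n : ℕ in atTop, α * Real.log n ≤ n := by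
    filter_upwards [(Real.isLittleO_log_id_atTop.bound (inv_pos.2 hα0)).natCast_atTop] with n hn
    rw [Real.norm_eq_abs, id, Real.norm_natCast] at hn
    calc α * Real.log n ≤ α * (α⁻¹ * n) := by gcongr; exact (le_abs_self _).trans hn
      _ = n := by field_simp
  have hsmall : ∀ᶠ n : ℕ in atTop, c * (n : ℝ) ^ (1 / 2 - α) < 1 - c ^ 2 * α := by
    have h : Tendsto (fun n : ℕ => c * (n : ℝ) ^ (-(α - 1 / 2))) atTop (𝓝 (c * 0)) :=
      ((tendsto_rpow_neg_atTop (by linarith)).comp tendsto_natCast_atTop_atTop).const_mul c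
    rw [mul_zero] at h
    simpa [neg_sub] using h.eventually_lt_const (by linarith)
  filter_upwards [eventually_ge_atTop 3, hlog_le, hsmall] with n hn hαn hsmall
  have hn0 : (0 : ℝ) < n := by positivity
  have hlog0 : 0 < Real.log n := Real.log_pos (by exact_mod_cast (by omega : 1 < n))
  refine ⟨α * Real.log n / n, ⟨by positivity, div_le_one_of_le₀ hαn hn0.le⟩, fun m hm0 hm => ?_⟩
  calc unionBound n (α * Real.log n / n) m
      ≤ unionBound n (α * Real.log n / n) (c * √(n / Real.log n) * 2 ^ (n - 1)) :=
        unionBound_le_unionBound (by positivity) (div_le_one_of_le₀ hαn hn0.le) hm0 hm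
    _ = c * √(n / Real.log n) * (1 - α * Real.log n / n) ^ n +
          (c * √(n / Real.log n)) ^ 2 * (α * Real.log n / n) :=
        unionBound_mul_two_pow _ _ (by omega)
    _ ≤ c * (n : ℝ) ^ (1 / 2 - α) + c ^ 2 * α := by
        rw [mul_assoc, mul_pow, Real.sq_sqrt (by positivity)]
        refine add_le_add (mul_le_mul_of_nonneg_left (sqrt_div_log_mul_one_sub_pow_le hn hαn) hc)
          (le_of_eq ?_)
        field_simp
    _ < 1 := by linarith

end RandomGreedy

/-- For every real `c` with `0 < c < √2` there exists `N` such that for all `n ≥ N`,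
every `n`-uniform hypergraph with at most `c·√(n/ln n)·2^(n-1)` edges is 2-colorable. -/
theorem random_greedy_two_coloring (c : ℝ) (hc0 : 0 < c) (hc : c < Real.sqrt 2) :
    ∃ N : ℕ, ∀ n : ℕ, N ≤ n →
      ∀ (V : Type) (E : Finset (Finset V)),
        (∀ e ∈ E, e.card = n) →
        (E.card : ℝ) ≤ c * Real.sqrt ((n : ℝ) / Real.log n) * 2 ^ (n - 1) →
        IsRColorable 2 E := by
  have hc2 : c ^ 2 < 2 := (Real.lt_sqrt hc0.le).1 hc
  -- `α = 1/4 + 1/(2c²)` gives `c²α = c²/4 + 1/2 < 1` while keeping `α > 1/2`.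
  have hα : 1 / 2 < 1 / 4 + 1 / (2 * c ^ 2) := by
    have : 1 / 4 < 1 / (2 * c ^ 2) := by
      rw [div_lt_div_iff₀ (by norm_num) (by positivity)]; linarith
    linarith
  have hcα : c ^ 2 * (1 / 4 + 1 / (2 * c ^ 2)) < 1 := by
    have h : c ^ 2 * (1 / 4 + 1 / (2 * c ^ 2)) = c ^ 2 / 4 + 1 / 2 := by field_simp
    linarith
  obtain ⟨N, hN⟩ := eventually_atTop.1
    (RandomGreedy.eventually_exists_unionBound_lt_one hc0.le hα hcα)
  refine ⟨N, fun n hn V E hcard hE => ?_⟩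
  obtain ⟨p, ⟨hp0, hp1⟩, hlt⟩ := hN n hn
  exact RandomGreedy.isRColorable_two_of_unionBound_lt_one hcard hp0 hp1
    (hlt _ (Nat.cast_nonneg _) hE)
end

section
/- Let n ≥ 2 be an integer and let k > 0 and p ∈ (0,1) be real numbers satisfying k·(1−p)^n + k²·p < 1. Then every n-uniform hypergraph with at most k·2^(n−1) edges is 2-colorable. -/
open Finset

theorem IsRColorable.of_subtype {V : Type*} [DecidableEq V] {r : ℕ} [NeZero r]
    {E : Finset (Finset V)} (W : Finset V)
    (h : IsRColorable r (E.image (Finset.subtype (· ∈ W)))) : IsRColorable r E := by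
  obtain ⟨c, hc⟩ := h
  refine ⟨fun v => if hv : v ∈ W then c ⟨v, hv⟩ else 0, fun e he => ?_⟩
  obtain ⟨u, hu, w, hw, huw⟩ := hc _ (mem_image_of_mem _ he)
  rw [mem_subtype] at hu hw
  exact ⟨u, hu, w, hw, by simpa [u.2, w.2] using huw⟩

section GreedyColoring

variable {V : Type*} (E : Finset (Finset V)) (σ : V → ℕ) (a b : ℕ)

/-- The red vertices of the greedy coloring along `σ`. The proof of `σ u < σ v` is carried
inside the recursion to make it well founded. -/
def IsGreedyRed (v : V) : Prop :=
  b ≤ σ v ∨ a ≤ σ v ∧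
    ∃ A ∈ E, v ∈ A ∧ ∀ u ∈ A, u ≠ v → ∃ _ : σ u < σ v, ¬ IsGreedyRed u
termination_by σ v

def IsConflict (A B : Finset V) (v : V) : Prop :=
  v ∈ A ∧ v ∈ B ∧ a ≤ σ v ∧ σ v < b ∧
    (∀ u ∈ A, u ≠ v → σ u < σ v) ∧ ∀ u ∈ B, u ≠ v → σ v < σ u

instance [DecidableEq V] (A B : Finset V) (v : V) : Decidable (IsConflict σ a b A B v) := by
  unfold IsConflict; infer_instance

def IsGoodOrdering : Prop :=
  Function.Injective σ ∧ (∀ e ∈ E, ∃ v ∈ e, a ≤ σ v) ∧ (∀ e ∈ E, ∃ v ∈ e, σ v < b) ∧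
    ∀ A ∈ E, ∀ B ∈ E, ∀ v, ¬ IsConflict σ a b A B v

variable {E σ a b}

theorem IsConflict.inter_eq [DecidableEq V] {A B : Finset V} {v : V} (h : IsConflict σ a b A B v) :
    A ∩ B = {v} := by
  obtain ⟨hvA, hvB, -, -, hlast, hfirst⟩ := h
  ext u
  simp only [mem_inter, mem_singleton]
  refine ⟨fun ⟨huA, huB⟩ => ?_, by rintro rfl; exact ⟨hvA, hvB⟩⟩
  by_contra huv
  exact (hlast u huA huv).asymm (hfirst u huB huv)

theorem not_isGoodOrdering_iff : ¬ IsGoodOrdering E σ a b ↔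
    ¬ Function.Injective σ ∨ (∃ e ∈ E, ∀ v ∈ e, σ v < a) ∨ (∃ e ∈ E, ∀ v ∈ e, b ≤ σ v) ∨
      ∃ A ∈ E, ∃ B ∈ E, ∃ v, IsConflict σ a b A B v := by
  rw [IsGoodOrdering, not_and_or, not_and_or, not_and_or]
  push Not
  rfl

theorem IsGoodOrdering.isRColorable_two (h : IsGoodOrdering E σ a b) : IsRColorable 2 E := by
  obtain ⟨hσ, hlow, hhigh, hconf⟩ := h
  classical
  refine ⟨fun v => if IsGreedyRed E σ a b v then 1 else 0, fun e he => ?_⟩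
  by_contra! hmono
  obtain ⟨v₀, hv₀⟩ : e.Nonempty := let ⟨v, hv, _⟩ := hlow e he; ⟨v, hv⟩
  have same : ∀ v ∈ e, (IsGreedyRed E σ a b v ↔ IsGreedyRed E σ a b v₀) := fun v hv => by
    have := hmono v hv v₀ hv₀
    split_ifs at this <;> simp_all
  by_cases hred : IsGreedyRed E σ a b v₀
  · -- the first vertex of `e` is red but below `b`, so it completes an all-blue edge `A`,
    -- and `A`, `e` conflict at it
    obtain ⟨v, hv, hmin⟩ := e.exists_min_image σ ⟨v₀, hv₀⟩
    obtain ⟨w, hw, hwb⟩ := hhigh e he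
    have hvb : σ v < b := (hmin w hw).trans_lt hwb
    have hv_red := (same v hv).2 hred
    rw [IsGreedyRed] at hv_red
    obtain hbv | ⟨hav, A, hA, hvA, hlast⟩ := hv_red
    · omega
    refine hconf A hA e he v ⟨hvA, hv, hav, hvb, fun u hu huv => (hlast u hu huv).1, ?_⟩
    exact fun u hu huv => (hmin u hu).lt_of_ne fun h => huv (hσ h).symm
  · -- the last vertex of `e` would have been painted red
    obtain ⟨v, hv, hmax⟩ := e.exists_max_image σ ⟨v₀, hv₀⟩
    refine hred ((same v hv).1 ?_)
    rw [IsGreedyRed]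
    obtain ⟨w, hw, haw⟩ := hlow e he
    refine .inr ⟨haw.trans (hmax w hw), e, he, hv, fun u hu huv => ⟨?_, ?_⟩⟩
    · exact (hmax u hu).lt_of_ne fun h => huv (hσ h)
    · exact fun h => hred ((same u hu).1 h)

end GreedyColoring

theorem card_filter_exists_le_mul {ι α : Type*} [Fintype α] {s : Finset ι} {P : ι → α → Prop}
    [∀ i, DecidablePred (P i)] [DecidablePred fun x => ∃ i ∈ s, P i x] {c : ℝ}
    (h : ∀ i ∈ s, (#{x | P i x} : ℝ) ≤ c) : (#{x | ∃ i ∈ s, P i x} : ℝ) ≤ #s * c := by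
  classical
  have hunion : ({x | ∃ i ∈ s, P i x} : Finset α) = s.biUnion fun i => {x | P i x} := by
    ext x; simp
  calc (#{x | ∃ i ∈ s, P i x} : ℝ) ≤ ∑ i ∈ s, (#{x | P i x} : ℝ) := by
        rw [hunion]; exact_mod_cast card_biUnion_le
    _ ≤ #s * c := by simpa using sum_le_sum h

theorem Fin.val_div_mul_sub_val_div_le {M : ℕ} (j : Fin M) :
    (j : ℝ) / M * (((M - 1 - j : ℕ) : ℝ) / M) ≤ 1 / 4 := by
  have hM : (0 : ℝ) < M := by exact_mod_cast j.pos
  have hsum : (j : ℝ) + ((M - 1 - j : ℕ) : ℝ) ≤ M := by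
    have := j.2
    norm_cast
    omega
  rw [div_mul_div_comm, div_le_iff₀ (by positivity)]
  nlinarith [sq_nonneg ((j : ℝ) - ((M - 1 - j : ℕ) : ℝ))]

section Counting

variable {V : Type*} [Fintype V] [DecidableEq V] {M : ℕ}

theorem card_filter_forall_mem (S : Finset V) (t : V → Finset (Fin M)) :
    (#{τ : V → Fin M | ∀ v ∈ S, τ v ∈ t v} : ℝ) =
      (∏ v ∈ S, (#(t v) : ℝ) / M) * M ^ Fintype.card V := by
  have hfilter : ({τ | ∀ v ∈ S, τ v ∈ t v} : Finset (V → Fin M)) =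
      Fintype.piFinset fun v => if v ∈ S then t v else univ := by
    ext τ
    simp only [mem_filter, mem_univ, true_and, Fintype.mem_piFinset]
    exact ⟨fun h v => by split_ifs with hv <;> simp [h v, hv],
      fun h v hv => by simpa [hv] using h v⟩
  -- the factor `#(t v) / M` is harmless even for `M = 0`, where `t v` is empty
  have hfactor : ∀ v, ((#(if v ∈ S then t v else univ) : ℕ) : ℝ) =
      (if v ∈ S then (#(t v) : ℝ) / M else 1) * M := fun v => by
    rcases eq_or_ne M 0 with rfl | hM
    · simp [eq_empty_of_isEmpty (t v)]
    · split_ifs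
      · field_simp
      · simp
  rw [hfilter, Fintype.card_piFinset, Nat.cast_prod]
  simp only [hfactor, prod_mul_distrib, prod_const, card_univ, Fintype.prod_ite_mem]

theorem card_filter_forall_mem_le (S : Finset V) {T : Finset (Fin M)} {c : ℕ} (hT : #T ≤ c) :
    (#{τ : V → Fin M | ∀ v ∈ S, τ v ∈ T} : ℝ) ≤ ((c : ℝ) / M) ^ #S * M ^ Fintype.card V := by
  rw [card_filter_forall_mem, prod_const]
  gcongr

theorem card_filter_forall_val_lt_le (S : Finset V) (a : ℕ) :
    (#{τ : V → Fin M | ∀ v ∈ S, (τ v : ℕ) < a} : ℝ) ≤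
      ((a : ℝ) / M) ^ #S * M ^ Fintype.card V := by
  simpa using card_filter_forall_mem_le S (T := {q : Fin M | (q : ℕ) < a})
    (Fin.card_filter_val_lt.trans_le (min_le_right _ _))

theorem card_filter_forall_le_val_le (S : Finset V) (b : ℕ) :
    (#{τ : V → Fin M | ∀ v ∈ S, b ≤ (τ v : ℕ)} : ℝ) ≤
      (((M - b : ℕ) : ℝ) / M) ^ #S * M ^ Fintype.card V := by
  have hT : #{q : Fin M | b ≤ (q : ℕ)} ≤ M - b := by
    have := card_filter_add_card_filter_not (s := (univ : Finset (Fin M))) fun q => (q : ℕ) < b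
    simp only [not_lt, Fin.card_filter_val_lt, card_univ, Fintype.card_fin] at this
    omega
  simpa using card_filter_forall_mem_le S hT

theorem card_filter_apply_eq_apply_le {x y : V} (hxy : x ≠ y) :
    (#{τ : V → Fin M | τ x = τ y} : ℝ) ≤ 1 / M * M ^ Fintype.card V := by
  have hsub : ({τ | τ x = τ y} : Finset (V → Fin M)) ⊆
      ({τ | ∃ j ∈ univ, ∀ v ∈ ({x, y} : Finset V), τ v ∈ ({j} : Finset (Fin M))} :
        Finset (V → Fin M)) := by
    intro τ hτ
    simp only [mem_filter, mem_univ, true_and] at hτ ⊢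
    exact ⟨τ x, by simp [hτ]⟩
  calc _ ≤ (#({τ | ∃ j ∈ univ, ∀ v ∈ ({x, y} : Finset V), τ v ∈ ({j} : Finset (Fin M))} :
          Finset (V → Fin M)) : ℝ) := mod_cast card_le_card hsub
    _ ≤ #(univ : Finset (Fin M)) * ((1 / M) ^ 2 * M ^ Fintype.card V) :=
        card_filter_exists_le_mul fun j _ => by
          simpa [card_pair hxy] using
            card_filter_forall_mem_le (M := M) {x, y} (card_singleton j).le
    _ ≤ 1 / M * M ^ Fintype.card V := by
        rw [card_univ, Fintype.card_fin]
        rcases eq_or_ne M 0 with hM | hM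
        · simp [hM]
        · field_simp; rfl

theorem card_filter_not_injective_le :
    (#{τ : V → Fin M | ¬ Function.Injective τ} : ℝ) ≤
      Fintype.card V ^ 2 / M * M ^ Fintype.card V := by
  have hsub : ({τ | ¬ Function.Injective τ} : Finset (V → Fin M)) ⊆
      ({τ | ∃ q ∈ (univ : Finset V).offDiag, τ q.1 = τ q.2} : Finset (V → Fin M)) := by
    intro τ hτ
    simp only [Function.Injective, mem_filter, mem_univ, true_and, not_forall] at hτ ⊢
    obtain ⟨x, y, hxy, hne⟩ := hτ
    exact ⟨(x, y), by simp [hne], hxy⟩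
  have hoff : (#(univ : Finset V).offDiag : ℝ) ≤ Fintype.card V ^ 2 := by
    exact_mod_cast (offDiag_card _).trans_le (Nat.sub_le _ _) |>.trans (by simp [sq])
  calc _ ≤ (#({τ | ∃ q ∈ (univ : Finset V).offDiag, τ q.1 = τ q.2} : Finset (V → Fin M)) : ℝ) :=
        mod_cast card_le_card hsub
    _ ≤ #(univ : Finset V).offDiag * (1 / M * M ^ Fintype.card V) :=
        card_filter_exists_le_mul fun q hq =>
          card_filter_apply_eq_apply_le (mem_offDiag.1 hq).2.2
    _ ≤ Fintype.card V ^ 2 * (1 / M * M ^ Fintype.card V) := by gcongr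
    _ = _ := by ring

theorem card_filter_eq_and_lt_and_gt_le {A B : Finset V} {v : V} {n : ℕ} (hAB : A ∩ B = {v})
    (hA : #A = n) (hB : #B = n) (j : Fin M) :
    (#{τ : V → Fin M | τ v = j ∧ (∀ u ∈ A, u ≠ v → τ u < j) ∧ ∀ u ∈ B, u ≠ v → j < τ u} : ℝ) ≤
      1 / M / 4 ^ (n - 1) * M ^ Fintype.card V := by
  have hvA : v ∈ A := (mem_inter.1 (hAB ▸ mem_singleton_self v)).1
  let t : V → Finset (Fin M) := fun u => if u = v then {j} else if u ∈ A then Iio j else Ioi j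
  have hsub : ({τ | τ v = j ∧ (∀ u ∈ A, u ≠ v → τ u < j) ∧ ∀ u ∈ B, u ≠ v → j < τ u} :
      Finset (V → Fin M)) ⊆ ({τ | ∀ u ∈ A ∪ B, τ u ∈ t u} : Finset (V → Fin M)) := by
    intro τ hτ
    obtain ⟨hv, hlast, hfirst⟩ := (mem_filter.1 hτ).2
    refine mem_filter.2 ⟨mem_univ _, fun u hu => ?_⟩
    by_cases huv : u = v
    · simp [t, huv, hv]
    by_cases huA : u ∈ A
    · simpa [t, huv, huA] using hlast u huA huv
    · simpa [t, huv, huA] using hfirst u ((mem_union.1 hu).resolve_left huA) huv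
  have hprodA : ∏ u ∈ A, (#(t u) : ℝ) / M = 1 / M * ((j : ℝ) / M) ^ (n - 1) := by
    have hrest : ∀ u ∈ A.erase v, (#(t u) : ℝ) / M = (j : ℝ) / M := fun u hu => by
      simp [t, ne_of_mem_erase hu, mem_of_mem_erase hu]
    rw [← mul_prod_erase A _ hvA, prod_congr rfl hrest, prod_const, card_erase_of_mem hvA, hA]
    simp [t]
  have hprodB : ∏ u ∈ B \ A, (#(t u) : ℝ) / M = (((M - 1 - j : ℕ) : ℝ) / M) ^ (n - 1) := by
    have hrest : ∀ u ∈ B \ A, (#(t u) : ℝ) / M = ((M - 1 - j : ℕ) : ℝ) / M := fun u hu => by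
      have huA := (mem_sdiff.1 hu).2
      simp [t, huA, show u ≠ v by rintro rfl; exact huA hvA]
    rw [prod_congr rfl hrest, prod_const, card_sdiff, hAB, card_singleton, hB]
  calc _ ≤ (#({τ | ∀ u ∈ A ∪ B, τ u ∈ t u} : Finset (V → Fin M)) : ℝ) :=
        mod_cast card_le_card hsub
    _ = 1 / M * ((j : ℝ) / M * (((M - 1 - j : ℕ) : ℝ) / M)) ^ (n - 1) * M ^ Fintype.card V := by
        rw [card_filter_forall_mem, ← union_sdiff_self_eq_union, prod_union disjoint_sdiff,
          hprodA, hprodB, mul_pow, mul_assoc (1 / (M : ℝ))]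
    _ ≤ 1 / M * (1 / 4) ^ (n - 1) * M ^ Fintype.card V := by
        gcongr
        exact Fin.val_div_mul_sub_val_div_le j
    _ = _ := by rw [one_div_pow]; ring

theorem card_filter_isConflict_le {A B : Finset V} {v : V} {n : ℕ} (a b : ℕ)
    (hAB : A ∩ B = {v}) (hA : #A = n) (hB : #B = n) :
    (#{τ : V → Fin M | IsConflict (fun u => (τ u : ℕ)) a b A B v} : ℝ) ≤
      ((b - a : ℕ) : ℝ) / M / 4 ^ (n - 1) * M ^ Fintype.card V := by
  set J : Finset (Fin M) := {j | a ≤ (j : ℕ) ∧ (j : ℕ) < b}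
  have hsub : ({τ | IsConflict (fun u => (τ u : ℕ)) a b A B v} : Finset (V → Fin M)) ⊆
      ({τ | ∃ j ∈ J, τ v = j ∧ (∀ u ∈ A, u ≠ v → τ u < j) ∧ ∀ u ∈ B, u ≠ v → j < τ u} :
        Finset (V → Fin M)) := by
    intro τ hτ
    obtain ⟨-, -, hav, hvb, hlast, hfirst⟩ := (mem_filter.1 hτ).2
    exact mem_filter.2 ⟨mem_univ _, τ v, mem_filter.2 ⟨mem_univ _, hav, hvb⟩, rfl, hlast, hfirst⟩
  have hJ : #J ≤ b - a := by
    rw [← Nat.card_Ico]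
    refine card_le_card_of_injOn (fun j => (j : ℕ)) (fun j hj => ?_) Fin.val_injective.injOn
    simpa using (mem_filter.1 hj).2
  calc _ ≤ (#({τ | ∃ j ∈ J, τ v = j ∧ (∀ u ∈ A, u ≠ v → τ u < j) ∧ ∀ u ∈ B, u ≠ v → j < τ u} :
          Finset (V → Fin M)) : ℝ) := mod_cast card_le_card hsub
    _ ≤ #J * (1 / M / 4 ^ (n - 1) * M ^ Fintype.card V) :=
        card_filter_exists_le_mul fun j _ => card_filter_eq_and_lt_and_gt_le hAB hA hB j
    _ ≤ ((b - a : ℕ) : ℝ) * (1 / M / 4 ^ (n - 1) * M ^ Fintype.card V) := by gcongr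
    _ = _ := by ring

theorem card_filter_exists_isConflict_le {A B : Finset V} {n : ℕ} (a b : ℕ) (hA : #A = n)
    (hB : #B = n) :
    (#{τ : V → Fin M | ∃ v, IsConflict (fun u => (τ u : ℕ)) a b A B v} : ℝ) ≤
      ((b - a : ℕ) : ℝ) / M / 4 ^ (n - 1) * M ^ Fintype.card V := by
  by_cases hAB : ∃ v, A ∩ B = {v}
  · obtain ⟨v, hv⟩ := hAB
    have hfilter :
        ({τ | ∃ v', IsConflict (fun u => (τ u : ℕ)) a b A B v'} : Finset (V → Fin M)) =
          ({τ | IsConflict (fun u => (τ u : ℕ)) a b A B v} : Finset (V → Fin M)) := by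
      refine filter_congr fun τ _ => ⟨fun ⟨v', hv'⟩ => ?_, fun h => ⟨v, h⟩⟩
      rwa [← singleton_inj.1 (hv'.inter_eq.symm.trans hv)]
    rw [hfilter]
    exact card_filter_isConflict_le a b hv hA hB
  · rw [filter_false_of_mem fun τ _ ⟨v, hv⟩ => hAB ⟨v, hv.inter_eq⟩, card_empty, Nat.cast_zero]
    positivity

instance (E : Finset (Finset V)) (σ : V → ℕ) (a b : ℕ) :
    Decidable (IsGoodOrdering E σ a b) := by
  unfold IsGoodOrdering; infer_instance

theorem card_filter_not_isGoodOrdering_le {E : Finset (Finset V)} {n : ℕ} (a b : ℕ)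
    (hE : ∀ e ∈ E, #e = n) :
    (#{τ : V → Fin M | ¬ IsGoodOrdering E (fun v => (τ v : ℕ)) a b} : ℝ) ≤
      (Fintype.card V ^ 2 / M + #E * ((a : ℝ) / M) ^ n + #E * (((M - b : ℕ) : ℝ) / M) ^ n +
        #E ^ 2 * (((b - a : ℕ) : ℝ) / M / 4 ^ (n - 1))) * M ^ Fintype.card V := by
  have hsplit : #{τ : V → Fin M | ¬ IsGoodOrdering E (fun v => (τ v : ℕ)) a b} ≤
      #{τ : V → Fin M | ¬ Function.Injective τ} +
      (#{τ : V → Fin M | ∃ e ∈ E, ∀ v ∈ e, (τ v : ℕ) < a} +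
      (#{τ : V → Fin M | ∃ e ∈ E, ∀ v ∈ e, b ≤ (τ v : ℕ)} +
      #{τ : V → Fin M | ∃ A ∈ E, ∃ B ∈ E, ∃ v, IsConflict (fun u => (τ u : ℕ)) a b A B v})) := by
    have hinj (τ : V → Fin M) : Function.Injective (fun v => (τ v : ℕ)) ↔ Function.Injective τ :=
      Fin.val_injective.of_comp_iff τ
    simp only [not_isGoodOrdering_iff, hinj, filter_or]
    exact (card_union_le _ _).trans <| Nat.add_le_add_left
      ((card_union_le _ _).trans (Nat.add_le_add_left (card_union_le _ _) _)) _
  have hlow : (#{τ : V → Fin M | ∃ e ∈ E, ∀ v ∈ e, (τ v : ℕ) < a} : ℝ) ≤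
      #E * (((a : ℝ) / M) ^ n * M ^ Fintype.card V) :=
    card_filter_exists_le_mul fun e he => hE e he ▸ card_filter_forall_val_lt_le e a
  have hhigh : (#{τ : V → Fin M | ∃ e ∈ E, ∀ v ∈ e, b ≤ (τ v : ℕ)} : ℝ) ≤
      #E * ((((M - b : ℕ) : ℝ) / M) ^ n * M ^ Fintype.card V) :=
    card_filter_exists_le_mul fun e he => hE e he ▸ card_filter_forall_le_val_le e b
  have hconf : (#{τ : V → Fin M | ∃ A ∈ E, ∃ B ∈ E, ∃ v,
      IsConflict (fun u => (τ u : ℕ)) a b A B v} : ℝ) ≤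
        #E * (#E * (((b - a : ℕ) : ℝ) / M / 4 ^ (n - 1) * M ^ Fintype.card V)) :=
    card_filter_exists_le_mul fun A hA => card_filter_exists_le_mul fun B hB =>
      card_filter_exists_isConflict_le a b (hE A hA) (hE B hB)
  have hinj := card_filter_not_injective_le (V := V) (M := M)
  have hsplit' := Nat.cast_le (α := ℝ).2 hsplit
  push_cast at hsplit'
  linarith

theorem exists_isGoodOrdering {E : Finset (Finset V)} {n a b : ℕ} (hE : ∀ e ∈ E, #e = n)
    (hM : 0 < M)
    (h : (Fintype.card V ^ 2 / M : ℝ) + #E * ((a : ℝ) / M) ^ n + #E * (((M - b : ℕ) : ℝ) / M) ^ n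
      + #E ^ 2 * (((b - a : ℕ) : ℝ) / M / 4 ^ (n - 1)) < 1) :
    ∃ τ : V → Fin M, IsGoodOrdering E (fun v => (τ v : ℕ)) a b := by
  by_contra! hbad
  have hcount := card_filter_not_isGoodOrdering_le (M := M) a b hE
  rw [filter_true_of_mem fun τ _ => hbad τ, card_univ, Fintype.card_fun, Fintype.card_fin,
    Nat.cast_pow] at hcount
  have := mul_lt_mul_of_pos_right h (by positivity : (0 : ℝ) < M ^ Fintype.card V)
  linarith

end Counting

theorem bad_density_le {n N m M a : ℕ} (hn : 1 ≤ n) {k p : ℝ} (hm : (m : ℝ) ≤ k * 2 ^ (n - 1))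
    (hM : (0 : ℝ) < M) (h2a : 2 * a ≤ M) (ha₁ : 2 * (a : ℝ) ≤ M * (1 - p))
    (ha₂ : M * (1 - p) < 2 * a + 2) :
    (N ^ 2 / M : ℝ) + m * ((a : ℝ) / M) ^ n + m * ((a : ℝ) / M) ^ n +
        m ^ 2 * (((M - 2 * a : ℕ) : ℝ) / M / 4 ^ (n - 1)) ≤
      (N ^ 2 + 2 * k ^ 2) / M + k * (1 - p) ^ n + k ^ 2 * p := by
  have hk : 0 ≤ k := nonneg_of_mul_nonneg_left ((Nat.cast_nonneg m).trans hm) (by positivity)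
  have hedges : m * ((a : ℝ) / M) ^ n + m * ((a : ℝ) / M) ^ n ≤ k * (1 - p) ^ n :=
    calc m * ((a : ℝ) / M) ^ n + m * ((a : ℝ) / M) ^ n
        ≤ 2 * (k * 2 ^ (n - 1)) * ((a : ℝ) / M) ^ n := by
          nlinarith [pow_nonneg (by positivity : (0 : ℝ) ≤ a / M) n]
      _ = k * (2 * a / M) ^ n := by
          have h2n : (2 : ℝ) ^ n = 2 * 2 ^ (n - 1) := by rw [← pow_succ', Nat.sub_add_cancel hn]
          rw [mul_div_assoc, mul_pow, h2n]
          ring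
      _ ≤ k * (1 - p) ^ n := by
          gcongr
          rw [div_le_iff₀ hM]
          linarith
  have hpairs : (m : ℝ) ^ 2 * (((M - 2 * a : ℕ) : ℝ) / M / 4 ^ (n - 1)) ≤ k ^ 2 * (p + 2 / M) :=
    calc (m : ℝ) ^ 2 * (((M - 2 * a : ℕ) : ℝ) / M / 4 ^ (n - 1))
        = ((m : ℝ) / 2 ^ (n - 1)) ^ 2 * (((M - 2 * a : ℕ) : ℝ) / M) := by
          rw [div_pow, ← pow_mul, mul_comm (n - 1), pow_mul]; ring
      _ ≤ k ^ 2 * (p + 2 / M) := by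
          gcongr
          · rwa [div_le_iff₀ (by positivity)]
          · rw [Nat.cast_sub h2a, div_le_iff₀ hM, add_mul, div_mul_cancel₀ _ hM.ne']
            push_cast
            linarith
  calc _ ≤ (N ^ 2 / M : ℝ) + k * (1 - p) ^ n + k ^ 2 * (p + 2 / M) := by linarith
    _ = _ := by ring

theorem exists_thresholds {n N m : ℕ} (hn : 1 ≤ n) {k p : ℝ} (hp₀ : 0 ≤ p) (hp₁ : p ≤ 1)
    (h : k * (1 - p) ^ n + k ^ 2 * p < 1) (hm : (m : ℝ) ≤ k * 2 ^ (n - 1)) :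
    ∃ M a : ℕ, 0 < M ∧ 2 * a ≤ M ∧
      (N ^ 2 / M : ℝ) + m * ((a : ℝ) / M) ^ n + m * ((a : ℝ) / M) ^ n +
        m ^ 2 * (((M - 2 * a : ℕ) : ℝ) / M / 4 ^ (n - 1)) < 1 := by
  obtain ⟨M, hM⟩ := exists_nat_gt ((N ^ 2 + 2 * k ^ 2) / (1 - k * (1 - p) ^ n - k ^ 2 * p))
  have hgap : 0 < 1 - k * (1 - p) ^ n - k ^ 2 * p := by linarith
  have hMpos : (0 : ℝ) < M := lt_of_le_of_lt (by positivity) hM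
  have hsmall : (N ^ 2 + 2 * k ^ 2) / M < 1 - k * (1 - p) ^ n - k ^ 2 * p := by
    have := (div_lt_iff₀ hgap).1 hM
    rw [div_lt_iff₀ hMpos]
    linarith
  -- `a = ⌊M (1 - p) / 2⌋` makes the middle range `[a, M - a)` have density about `p`
  set a := ⌊(M : ℝ) * (1 - p) / 2⌋₊
  have ha_le : (a : ℝ) ≤ M * (1 - p) / 2 :=
    Nat.floor_le (div_nonneg (mul_nonneg hMpos.le (by linarith)) zero_le_two)
  have ha_gt : (M : ℝ) * (1 - p) / 2 < a + 1 := Nat.lt_floor_add_one _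
  have h2a : 2 * a ≤ M := by exact_mod_cast (show (2 * a : ℝ) ≤ M by nlinarith)
  refine ⟨M, a, by exact_mod_cast hMpos, h2a, ?_⟩
  have := bad_density_le (N := N) (p := p) hn hm hMpos h2a (by linarith) (by linarith)
  linarith

theorem isRColorable_two_of_card_le {V : Type*} [Fintype V] [DecidableEq V] {n : ℕ} (hn : 1 ≤ n)
    {k p : ℝ} (hp₀ : 0 ≤ p) (hp₁ : p ≤ 1) (h : k * (1 - p) ^ n + k ^ 2 * p < 1)
    {E : Finset (Finset V)} (hE : ∀ e ∈ E, #e = n) (hcard : (#E : ℝ) ≤ k * 2 ^ (n - 1)) :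
    IsRColorable 2 E := by
  obtain ⟨M, a, hM, h2a, hbad⟩ := exists_thresholds (N := Fintype.card V) hn hp₀ hp₁ h hcard
  obtain ⟨τ, hτ⟩ := exists_isGoodOrdering (b := M - a) hE hM
    (by rwa [Nat.sub_sub_self (by omega), Nat.sub_sub, ← two_mul])
  exact hτ.isRColorable_two

theorem property_B_criterion_general (n : ℕ) (hn : 2 ≤ n) (k p : ℝ)
    (hp : p ∈ Set.Ioo (0 : ℝ) 1) (h : k * (1 - p) ^ n + k ^ 2 * p < 1) :
    ∀ (V : Type) (E : Finset (Finset V)),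
      (∀ e ∈ E, e.card = n) →
      (E.card : ℝ) ≤ k * 2 ^ (n - 1) →
      IsRColorable 2 E := by
  intro V E hE hcard
  classical
  set W := E.biUnion id
  refine IsRColorable.of_subtype W (isRColorable_two_of_card_le (by omega) hp.1.le hp.2.le h
    (fun e he => ?_) ((Nat.cast_le.2 card_image_le).trans hcard))
  obtain ⟨e, heE, rfl⟩ := mem_image.1 he
  have heW : e ⊆ W := subset_biUnion_of_mem id heE
  rw [card_subtype, filter_true_of_mem fun v hv => heW hv, hE e heE]

/-- If `n ≥ 2`, `k > 0` and `p ∈ (0,1)` satisfy `k(1-p)^n + k²p < 1`, then every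
`n`-uniform hypergraph with at most `k·2^(n-1)` edges is 2-colorable. -/
theorem property_B_criterion (n : ℕ) (hn : 2 ≤ n) (k p : ℝ) (hk : 0 < k)
    (hp : p ∈ Set.Ioo (0 : ℝ) 1) (h : k * (1 - p) ^ n + k ^ 2 * p < 1) :
    ∀ (V : Type) (E : Finset (Finset V)),
      (∀ e ∈ E, e.card = n) →
      (E.card : ℝ) ≤ k * 2 ^ (n - 1) →
      IsRColorable 2 E :=
  property_B_criterion_general n hn k p hp h
end

section
/- Let H = (V,E) be an n-uniform hypergraph (n ≥ 2) and let t : V → ℝ be injective. If there is no conflicting pair of edges under t, then H is 2-colorable. -/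
/-- `(e, f)` is a conflicting pair under the injective birth-time assignment `t`
if the last vertex of `e` (the vertex of `e` with the largest `t`-value) equals
the first vertex of `f` (the vertex of `f` with the smallest `t`-value). -/
def ConflictingPair {V : Type*} (t : V → ℝ) (e f : Finset V) : Prop :=
  ∃ v, v ∈ e ∧ v ∈ f ∧ (∀ w ∈ e, t w ≤ t v) ∧ (∀ w ∈ f, t v ≤ t w)

section FirstVertexColoring

variable {V : Type*} (t : V → ℝ) (E : Finset (Finset V))

def IsFirstVertex (v : V) : Prop :=
  ∃ f ∈ E, v ∈ f ∧ ∀ w ∈ f, t v ≤ t w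

open Classical in
noncomputable def firstVertexColoring (v : V) : Fin 2 :=
  if IsFirstVertex t E v then 0 else 1

variable {t E}

theorem not_isFirstVertex_of_last (hconf : ¬ ∃ e ∈ E, ∃ f ∈ E, ConflictingPair t e f)
    {e : Finset V} (he : e ∈ E) {w : V} (hw : w ∈ e) (hlast : ∀ x ∈ e, t x ≤ t w) :
    ¬ IsFirstVertex t E w := by
  rintro ⟨f, hf, hwf, hfirst⟩
  exact hconf ⟨e, he, f, hf, w, hw, hwf, hlast, hfirst⟩

theorem isRColorable_two_of_no_conflictingPair (hE : ∀ e ∈ E, e.Nonempty)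
    (hconf : ¬ ∃ e ∈ E, ∃ f ∈ E, ConflictingPair t e f) :
    IsRColorable 2 E := by
  refine ⟨firstVertexColoring t E, fun e he => ?_⟩
  obtain ⟨u, hu, hfirst⟩ := e.exists_min_image t (hE e he)
  obtain ⟨w, hw, hlast⟩ := e.exists_max_image t (hE e he)
  have hu0 : firstVertexColoring t E u = 0 := if_pos ⟨e, he, hu, hfirst⟩
  have hw1 : firstVertexColoring t E w = 1 := if_neg (not_isFirstVertex_of_last hconf he hw hlast)
  exact ⟨u, hu, w, hw, by simp [hu0, hw1]⟩

end FirstVertexColoring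

theorem two_colorable_of_no_conflicting_pair_general (n : ℕ) (hn : 2 ≤ n)
    (V : Type) (E : Finset (Finset V)) (hE : ∀ e ∈ E, e.card = n)
    (t : V → ℝ)
    (hconf : ¬ ∃ e ∈ E, ∃ f ∈ E, ConflictingPair t e f) :
    IsRColorable 2 E :=
  isRColorable_two_of_no_conflictingPair
    (fun e he => Finset.card_pos.mp (by rw [hE e he]; omega)) hconf

/-- If `t : V → ℝ` is injective and no pair of edges of an `n`-uniform hypergraph
(`n ≥ 2`) is conflicting under `t`, then the hypergraph is 2-colorable. -/
theorem two_colorable_of_no_conflicting_pair (n : ℕ) (hn : 2 ≤ n)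
    (V : Type) (E : Finset (Finset V)) (hE : ∀ e ∈ E, e.card = n)
    (t : V → ℝ) (ht : Function.Injective t)
    (hconf : ¬ ∃ e ∈ E, ∃ f ∈ E, ConflictingPair t e f) :
    IsRColorable 2 E :=
  two_colorable_of_no_conflicting_pair_general n hn V E hE t hconf
end

section
/- Let r ≥ 2 and n ≥ 2 be integers, let H = (V,E) be an n-uniform hypergraph, and let t : V → ℝ be injective. If no r-chain of edges of H is conflicting under t, then H is r-colorable. -/
/-- `f 0, f 1, …, f (r-1)` is an `r`-chain of edges of `E`: consecutive edges meet
in exactly one vertex and non-consecutive edges are disjoint. -/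
def IsRChain {V : Type*} [DecidableEq V] (r : ℕ) (E : Finset (Finset V))
    (f : ℕ → Finset V) : Prop :=
  (∀ i < r, f i ∈ E) ∧
  (∀ i, i + 1 < r → (f i ∩ f (i + 1)).card = 1) ∧
  (∀ i j, j < r → i + 1 < j → f i ∩ f j = ∅)

/-- An `r`-chain is conflicting under `t` if, for each `i`, the last vertex of
`f i` (largest `t`-value) is the first vertex of `f (i+1)` (smallest `t`-value). -/
def IsConflictingChain {V : Type*} (r : ℕ) (t : V → ℝ) (f : ℕ → Finset V) : Prop :=
  ∀ i, i + 1 < r → ∃ v, v ∈ f i ∧ v ∈ f (i + 1) ∧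
    (∀ w ∈ f i, t w ≤ t v) ∧ (∀ w ∈ f (i + 1), t v ≤ t w)

namespace IsConflictingChain

variable {V : Type*} {r : ℕ} {t : V → ℝ} {f : ℕ → Finset V}

theorem mono {k : ℕ} (hf : IsConflictingChain k t f) (hrk : r ≤ k) : IsConflictingChain r t f :=
  fun i hi => hf i (by omega)

theorem le_of_mem_of_mem (hf : IsConflictingChain r t f) {i j : ℕ} (hij : i < j) (hj : j < r)
    {w w' : V} (hw : w ∈ f i) (hw' : w' ∈ f j) : t w ≤ t w' := by
  induction j, hij using Nat.le_induction generalizing w' with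
  | base =>
    obtain ⟨v, -, -, hmax, hmin⟩ := hf i hj
    exact (hmax w hw).trans (hmin w' hw')
  | succ j hij ih =>
    obtain ⟨v, hv, -, -, hmin⟩ := hf j hj
    exact (ih (by omega) hv).trans (hmin w' hw')

theorem lt_of_mem_of_mem (hf : IsConflictingChain r t f) (ht : Function.Injective t) {i j : ℕ}
    (hcard : 1 < (f (i + 1)).card) (hij : i + 1 < j) (hj : j < r) {w w' : V} (hw : w ∈ f i)
    (hw' : w' ∈ f j) : t w < t w' := by
  obtain ⟨v, -, -, hmax, hmin⟩ := hf i (by omega)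
  obtain ⟨x, hx, hxv⟩ := Finset.exists_mem_ne hcard v
  calc t w ≤ t v := hmax w hw
    _ < t x := (hmin x hx).lt_of_ne (ht.ne hxv.symm)
    _ ≤ t w' := hf.le_of_mem_of_mem hij hj hx hw'

variable [DecidableEq V]

theorem card_inter_succ (hf : IsConflictingChain r t f) (ht : Function.Injective t) {i : ℕ}
    (hi : i + 1 < r) : (f i ∩ f (i + 1)).card = 1 := by
  obtain ⟨v, hv, hv', hmax, hmin⟩ := hf i hi
  refine Finset.card_eq_one.2 ⟨v, Finset.ext fun w => ?_⟩
  simp only [Finset.mem_inter, Finset.mem_singleton]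
  constructor
  · rintro ⟨hw, hw'⟩
    exact ht ((hmax w hw).antisymm (hmin w hw'))
  · rintro rfl
    exact ⟨hv, hv'⟩

theorem inter_eq_empty (hf : IsConflictingChain r t f) (ht : Function.Injective t) {i j : ℕ}
    (hcard : 1 < (f (i + 1)).card) (hij : i + 1 < j) (hj : j < r) : f i ∩ f j = ∅ :=
  Finset.eq_empty_iff_forall_notMem.2 fun _ hw =>
    (hf.lt_of_mem_of_mem ht hcard hij hj (Finset.mem_inter.1 hw).1 (Finset.mem_inter.1 hw).2).false

theorem isRChain (hf : IsConflictingChain r t f) (ht : Function.Injective t)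
    {E : Finset (Finset V)} (hfE : ∀ i < r, f i ∈ E) (hcard : ∀ e ∈ E, 1 < e.card) :
    IsRChain r E f :=
  ⟨hfE, fun _ hi => hf.card_inter_succ ht hi,
    fun _ _ hj hij => hf.inter_eq_empty ht (hcard _ (hfE _ (by omega))) hij hj⟩

end IsConflictingChain

section Depth

variable {V : Type*} {E : Finset (Finset V)} {t : V → ℝ}

def EndsConflictingSeq (E : Finset (Finset V)) (t : V → ℝ) (v : V) (k : ℕ) : Prop :=
  ∃ g : ℕ → Finset V, (∀ i < k, g i ∈ E) ∧ IsConflictingChain k t g ∧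
    (k ≠ 0 → v ∈ g (k - 1) ∧ ∀ w ∈ g (k - 1), t w ≤ t v)

theorem endsConflictingSeq_zero (v : V) : EndsConflictingSeq E t v 0 :=
  ⟨fun _ => ∅, fun _ hi => absurd hi (Nat.not_lt_zero _),
    fun _ hi => absurd hi (Nat.not_lt_zero _), fun h => absurd rfl h⟩

theorem EndsConflictingSeq.succ {u v : V} {k : ℕ} {e : Finset V}
    (h : EndsConflictingSeq E t u k) (he : e ∈ E) (hu : u ∈ e) (hmin : ∀ w ∈ e, t u ≤ t w)
    (hv : v ∈ e) (hmax : ∀ w ∈ e, t w ≤ t v) : EndsConflictingSeq E t v (k + 1) := by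
  obtain ⟨g, hgE, hg, hend⟩ := h
  refine ⟨Function.update g k e, fun i hi => ?_, fun i hi => ?_, fun _ => ?_⟩
  · rcases Nat.lt_succ_iff_lt_or_eq.1 hi with hi | rfl
    · rw [Function.update_of_ne hi.ne]
      exact hgE i hi
    · rwa [Function.update_self]
  · rcases Nat.lt_succ_iff_lt_or_eq.1 hi with hi | rfl
    · rw [Function.update_of_ne (by omega), Function.update_of_ne hi.ne]
      exact hg i hi
    · obtain ⟨hu', humax⟩ := hend (Nat.succ_ne_zero i)
      rw [Nat.add_sub_cancel] at hu' humax
      rw [Function.update_of_ne (by omega), Function.update_self]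
      exact ⟨u, hu', hu, humax, hmin⟩
  · rw [Nat.add_sub_cancel, Function.update_self]
    exact ⟨hv, hmax⟩

theorem EndsConflictingSeq.lt [DecidableEq V] {r k : ℕ} {v : V} (h : EndsConflictingSeq E t v k)
    (hcard : ∀ e ∈ E, 1 < e.card) (ht : Function.Injective t)
    (hconf : ¬ ∃ f : ℕ → Finset V, IsRChain r E f ∧ IsConflictingChain r t f) : k < r := by
  obtain ⟨g, hgE, hg, -⟩ := h
  by_contra! hrk
  exact hconf ⟨g, (hg.mono hrk).isRChain ht (fun i hi => hgE i (by omega)) hcard, hg.mono hrk⟩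

end Depth

theorem r_colorable_of_no_conflicting_chain_general (r n : ℕ) (hn : 2 ≤ n)
    (V : Type) [DecidableEq V] (E : Finset (Finset V)) (hE : ∀ e ∈ E, e.card = n)
    (t : V → ℝ) (ht : Function.Injective t)
    (hconf : ¬ ∃ f : ℕ → Finset V, IsRChain r E f ∧ IsConflictingChain r t f) :
    IsRColorable r E := by
  classical
  have hcard : ∀ e ∈ E, 1 < e.card := fun e he => by rw [hE e he]; omega
  have hlt : ∀ v k, EndsConflictingSeq E t v k → k < r := fun _ _ h => h.lt hcard ht hconf
  let depth : V → ℕ := fun v => Nat.findGreatest (EndsConflictingSeq E t v) r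
  have hdepth : ∀ v, EndsConflictingSeq E t v (depth v) := fun v =>
    Nat.findGreatest_spec (Nat.zero_le r) (endsConflictingSeq_zero v)
  refine ⟨fun v => ⟨depth v, hlt v _ (hdepth v)⟩, fun e he => ?_⟩
  have hne : e.Nonempty := Finset.card_pos.1 (by have := hcard e he; omega)
  obtain ⟨u, hu, humin⟩ := e.exists_min_image t hne
  obtain ⟨v, hv, hvmax⟩ := e.exists_max_image t hne
  have hv_succ : EndsConflictingSeq E t v (depth u + 1) := (hdepth u).succ he hu humin hv hvmax
  have hlt_depth : depth u < depth v := Nat.le_findGreatest (hlt v _ hv_succ).le hv_succ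
  exact ⟨u, hu, v, hv, fun h => hlt_depth.ne (congrArg Fin.val h)⟩

/-- If `t : V → ℝ` is injective and no `r`-chain of edges of an `n`-uniform
hypergraph (`r, n ≥ 2`) is conflicting under `t`, then the hypergraph is
`r`-colorable. -/
theorem r_colorable_of_no_conflicting_chain (r n : ℕ) (hr : 2 ≤ r) (hn : 2 ≤ n)
    (V : Type) [DecidableEq V] (E : Finset (Finset V)) (hE : ∀ e ∈ E, e.card = n)
    (t : V → ℝ) (ht : Function.Injective t)
    (hconf : ¬ ∃ f : ℕ → Finset V, IsRChain r E f ∧ IsConflictingChain r t f) :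
    IsRColorable r E :=
  r_colorable_of_no_conflicting_chain_general r n hn V E hE t ht hconf
end

section
/- Let H = (V,E) be an n-uniform hypergraph with V finite, let p ∈ (0,1), and let (t_v)_{v∈V} be independent random variables, each uniformly distributed on [0,1]. Then the probability that there exist edges e, f with |e ∩ f| = 1 such that the common vertex v of e and f satisfies t_v = max_{w∈e} t_w, t_v = min_{w∈f} t_w, and t_v ∈ [(1−p)/2, (1+p)/2], is at most |E|²·p. -/
/-!
Union bound over the `|E|²` ordered pairs of edges: for a pair `(e, f)` the event can only occur
when `e ∩ f = {v}`, and then it forces the birth time of that single vertex `v` into an interval of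
length `p`, which has probability at most `p`.
-/

open MeasureTheory

/-- The joint distribution of independent birth times `(t_v)_{v ∈ V}`, each
uniformly distributed on `[0,1]`: the product of uniform measures on `[0,1]`. -/
noncomputable def birthTimeMeasure (V : Type*) [Fintype V] : Measure (V → ℝ) :=
  Measure.pi fun _ => volume.restrict (Set.Icc (0 : ℝ) 1)

open scoped ENNReal

theorem measure_biUnion_finset_le_card_mul {α ι : Type*} [MeasurableSpace α] (μ : Measure α)
    (I : Finset ι) (A : ι → Set α) {c : ℝ≥0∞} (h : ∀ i ∈ I, μ (A i) ≤ c) :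
    μ (⋃ i ∈ I, A i) ≤ I.card * c :=
  calc μ (⋃ i ∈ I, A i) ≤ ∑ i ∈ I, μ (A i) := measure_biUnion_finset_le I A
    _ ≤ ∑ _i ∈ I, c := Finset.sum_le_sum h
    _ = I.card * c := by rw [Finset.sum_const, nsmul_eq_mul]

instance isProbabilityMeasure_restrict_Icc_zero_one :
    IsProbabilityMeasure (volume.restrict (Set.Icc (0 : ℝ) 1)) :=
  ⟨by simp⟩

section BirthTimes

variable {V : Type*} [Fintype V]

theorem birthTimeMeasure_eval_preimage (v : V) {s : Set ℝ} (hs : MeasurableSet s) :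
    birthTimeMeasure V (Function.eval v ⁻¹' s) = volume (s ∩ Set.Icc 0 1) := by
  rw [birthTimeMeasure, (measurePreserving_eval _ v).measure_preimage hs.nullMeasurableSet,
    Measure.restrict_apply hs]

theorem birthTimeMeasure_eval_preimage_le (v : V) {s : Set ℝ} (hs : MeasurableSet s) :
    birthTimeMeasure V (Function.eval v ⁻¹' s) ≤ volume s :=
  (birthTimeMeasure_eval_preimage v hs).trans_le (measure_mono Set.inter_subset_left)

theorem birthTimeMeasure_unique_common_vertex_le [DecidableEq V] (e f : Finset V) {s : Set ℝ}
    (hs : MeasurableSet s) :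
    birthTimeMeasure V {t | ∃ v, e ∩ f = {v} ∧ t v ∈ s} ≤ volume s := by
  by_cases h : ∃ v, e ∩ f = {v}
  · obtain ⟨v₀, hv₀⟩ := h
    refine le_trans (measure_mono ?_) (birthTimeMeasure_eval_preimage_le v₀ hs)
    rintro t ⟨v, hv, hts⟩
    rwa [Finset.singleton_injective (hv₀.symm.trans hv)]
  · push Not at h
    simp [h]

end BirthTimes

theorem middle_conflict_probability_general (V : Type) [Fintype V] [DecidableEq V]
    (E : Finset (Finset V)) (p : ℝ) :
    birthTimeMeasure V
      {t : V → ℝ | ∃ e ∈ E, ∃ f ∈ E, ∃ v, e ∩ f = {v} ∧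
        (∀ w ∈ e, t w ≤ t v) ∧ (∀ w ∈ f, t v ≤ t w) ∧
        t v ∈ Set.Icc ((1 - p) / 2) ((1 + p) / 2)}
      ≤ ENNReal.ofReal ((E.card : ℝ) ^ 2 * p) := by
  set s := Set.Icc ((1 - p) / 2) ((1 + p) / 2)
  calc _ ≤ birthTimeMeasure V (⋃ ef ∈ E ×ˢ E, {t | ∃ v, ef.1 ∩ ef.2 = {v} ∧ t v ∈ s}) := by
        refine measure_mono ?_
        rintro t ⟨e, he, f, hf, v, hv, -, -, hts⟩
        exact Set.mem_biUnion (x := (e, f)) (Finset.mem_product.2 ⟨he, hf⟩) ⟨v, hv, hts⟩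
    _ ≤ (E ×ˢ E).card * volume s :=
        measure_biUnion_finset_le_card_mul _ _ _ fun ef _ =>
          birthTimeMeasure_unique_common_vertex_le ef.1 ef.2 measurableSet_Icc
    _ = ENNReal.ofReal ((E.card : ℝ) ^ 2 * p) := by
        rw [Finset.card_product, Real.volume_Icc, show (1 + p) / 2 - (1 - p) / 2 = p by ring,
          ENNReal.ofReal_mul (by positivity), ENNReal.ofReal_pow (Nat.cast_nonneg _),
          ENNReal.ofReal_natCast, Nat.cast_mul, sq]

/-- For an `n`-uniform hypergraph with finite vertex set `V` and independent
uniform-`[0,1]` birth times, the probability that there exist edges `e, f` with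
`e ∩ f = {v}` such that `t v` is the largest birth time in `e`, the smallest
birth time in `f`, and lies in `[(1-p)/2, (1+p)/2]`, is at most `|E|²·p`. -/
theorem middle_conflict_probability (n : ℕ) (V : Type) [Fintype V] [DecidableEq V]
    (E : Finset (Finset V)) (hE : ∀ e ∈ E, e.card = n)
    (p : ℝ) (hp : p ∈ Set.Ioo (0 : ℝ) 1) :
    birthTimeMeasure V
      {t : V → ℝ | ∃ e ∈ E, ∃ f ∈ E, ∃ v, e ∩ f = {v} ∧
        (∀ w ∈ e, t w ≤ t v) ∧ (∀ w ∈ f, t v ≤ t w) ∧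
        t v ∈ Set.Icc ((1 - p) / 2) ((1 + p) / 2)}
      ≤ ENNReal.ofReal ((E.card : ℝ) ^ 2 * p) :=
  middle_conflict_probability_general V E p
end

section
/- Fix a real number c > 0. For n ≥ 2 define k_n = c·√(n/ln n) and p_n = ln(n/k_n)/n. Then lim_{n→∞} ( k_n·(1−p_n)^n + k_n²·p_n ) = c²/2. -/
/-!
Write `k = c √(n / ln n)` and `p = ln (n / k) / n`. Since `(1 - p)^n ≤ e^{-np} = k / n`, the first
term lies between `0` and `k² / n = c² / ln n`, so it vanishes. In the second term
`k² p = c² ln (n / k) / ln n` with `ln (n / k) = ln n / 2 - ln c + ln (ln n) / 2`, so it tends to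
`c² / 2`.
-/

open Real Filter Topology

lemma tendsto_div_log_atTop : Tendsto (fun x : ℝ => x / log x) atTop atTop := by
  refine ((tendsto_exp_div_pow_atTop 1).comp tendsto_log_atTop).congr' ?_
  filter_upwards [eventually_gt_atTop 0] with x hx
  simp [exp_log hx]

noncomputable def balancedK (c x : ℝ) : ℝ := c * √(x / log x)

section

variable {c : ℝ}

lemma tendsto_balancedK_atTop (hc : 0 < c) : Tendsto (balancedK c) atTop atTop :=
  (tendsto_sqrt_atTop.comp tendsto_div_log_atTop).const_mul_atTop hc

lemma balancedK_sq_div {x : ℝ} (hx : 1 < x) : balancedK c x ^ 2 / x = c ^ 2 / log x := by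
  have hlog : 0 < log x := log_pos hx
  rw [balancedK, mul_pow, sq_sqrt (div_pos (by linarith) hlog).le]
  field_simp

lemma tendsto_balancedK_sq_div : Tendsto (fun x => balancedK c x ^ 2 / x) atTop (𝓝 0) := by
  have h := (tendsto_inv_atTop_zero.comp tendsto_log_atTop).const_mul (c ^ 2)
  rw [mul_zero] at h
  refine h.congr' ?_
  filter_upwards [eventually_gt_atTop 1] with x hx
  rw [balancedK_sq_div hx, Function.comp_apply, div_eq_mul_inv]

lemma log_div_balancedK (hc : 0 < c) {x : ℝ} (hx : 1 < x) :
    log (x / balancedK c x) = log x / 2 - log c + log (log x) / 2 := by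
  have hlog : 0 < log x := log_pos hx
  have hx0 : 0 < x := by linarith
  rw [balancedK, log_div hx0.ne' (by positivity), log_mul hc.ne' (by positivity),
    log_sqrt (by positivity), log_div hx0.ne' hlog.ne']
  ring

lemma tendsto_balancedK_sq_mul_log_div (hc : 0 < c) :
    Tendsto (fun x => balancedK c x ^ 2 * (log (x / balancedK c x) / x)) atTop
      (𝓝 (c ^ 2 / 2)) := by
  have hinv : Tendsto (fun x => (log x)⁻¹) atTop (𝓝 0) :=
    tendsto_inv_atTop_zero.comp tendsto_log_atTop
  have hloglog : Tendsto (fun x => log (log x) / log x) atTop (𝓝 0) :=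
    isLittleO_log_id_atTop.tendsto_div_nhds_zero.comp tendsto_log_atTop
  have h : Tendsto (fun x => c ^ 2 * (1 / 2 - log c * (log x)⁻¹ + log (log x) / log x / 2))
      atTop (𝓝 (c ^ 2 / 2)) := by
    simpa [div_eq_mul_inv] using
      (((tendsto_const_nhds (x := (1 : ℝ) / 2)).sub (hinv.const_mul (log c))).add
        (hloglog.div_const 2)).const_mul (c ^ 2)
  refine h.congr' ?_
  filter_upwards [eventually_gt_atTop 1] with x hx
  have hlog : 0 < log x := log_pos hx
  rw [mul_div_assoc', mul_div_right_comm, balancedK_sq_div hx, log_div_balancedK hc hx]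
  field_simp

end

lemma log_div_le_self {x k : ℝ} (hx : 0 ≤ x) (hk : 1 ≤ k) : log (x / k) ≤ x :=
  (log_le_self (by positivity)).trans (div_le_self hx hk)

lemma mul_one_sub_log_div_pow_nonneg {k : ℝ} (n : ℕ) (hk : 1 ≤ k) :
    0 ≤ k * (1 - log (n / k) / n) ^ n := by
  have : log (n / k) / n ≤ 1 :=
    div_le_one_of_le₀ (log_div_le_self n.cast_nonneg hk) n.cast_nonneg
  have : 0 ≤ 1 - log (n / k) / n := by linarith
  positivity

lemma mul_one_sub_log_div_pow_le {k : ℝ} {n : ℕ} (hn : 0 < n) (hk : 1 ≤ k) :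
    k * (1 - log (n / k) / n) ^ n ≤ k ^ 2 / n := by
  have hk0 : 0 < k := one_pos.trans_le hk
  have hn0 : (0 : ℝ) < n := Nat.cast_pos.mpr hn
  calc k * (1 - log (n / k) / n) ^ n ≤ k * exp (-log (n / k)) :=
        mul_le_mul_of_nonneg_left (one_sub_div_pow_le_exp_neg (log_div_le_self hn0.le hk)) hk0.le
    _ = k ^ 2 / n := by rw [exp_neg, exp_log (by positivity)]; field_simp

lemma tendsto_mul_one_sub_log_div_pow_zero {k : ℕ → ℝ} (hk : ∀ᶠ n in atTop, 1 ≤ k n)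
    (hk2 : Tendsto (fun n => k n ^ 2 / n) atTop (𝓝 0)) :
    Tendsto (fun n => k n * (1 - log (n / k n) / n) ^ n) atTop (𝓝 0) := by
  refine tendsto_of_tendsto_of_tendsto_of_le_of_le' tendsto_const_nhds hk2 ?_ ?_ <;>
    filter_upwards [hk, eventually_gt_atTop 0] with n hkn hn
  exacts [mul_one_sub_log_div_pow_nonneg n hkn, mul_one_sub_log_div_pow_le hn hkn]

/-- Fix `c > 0`.  With `k n = c·√(n / ln n)` and `p n = ln(n / k n) / n`, the
quantity `k n · (1 - p n)^n + (k n)² · p n` tends to `c²/2` as `n → ∞`. -/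
theorem limit_of_optimized_bound (c : ℝ) (hc : 0 < c) :
    Filter.Tendsto
      (fun n : ℕ =>
        (c * Real.sqrt ((n : ℝ) / Real.log n)) *
            (1 - Real.log ((n : ℝ) / (c * Real.sqrt ((n : ℝ) / Real.log n))) / (n : ℝ)) ^ n +
          (c * Real.sqrt ((n : ℝ) / Real.log n)) ^ 2 *
            (Real.log ((n : ℝ) / (c * Real.sqrt ((n : ℝ) / Real.log n))) / (n : ℝ)))
      Filter.atTop (nhds (c ^ 2 / 2)) := by
  have hk := (tendsto_balancedK_atTop hc).comp tendsto_natCast_atTop_atTop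
  have hfirst := tendsto_mul_one_sub_log_div_pow_zero (hk.eventually_ge_atTop 1)
    (tendsto_balancedK_sq_div.comp tendsto_natCast_atTop_atTop)
  have hsecond := (tendsto_balancedK_sq_mul_log_div hc).comp tendsto_natCast_atTop_atTop
  rw [← zero_add (c ^ 2 / 2)]
  exact hfirst.add hsecond
end

section
/- Let r ≥ 2 and n ≥ 2 be integers, let p ∈ (0,1), and let t : V → [0,1] be injective on the vertex set of an n-uniform hypergraph. Suppose (f_1,…,f_r) is an r-chain that is conflicting under t, with f_i ∩ f_{i+1} = {x_i} for i = 1,…,r−1, and suppose every edge f_i has length at least (1−p)/r under t. Then for each i = 1,…,r−1, the birth time t(x_i) lies in the interval [(i − i·p)/r, (i + (r−i)·p)/r]. -/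
/-- The length of an edge `e` under `t`: the length of the shortest interval
containing all birth times of vertices of `e`, i.e. `max_{v ∈ e} t v − min_{v ∈ e} t v`. -/
noncomputable def edgeLength {V : Type*} (t : V → ℝ) (e : Finset V) : ℝ :=
  sSup (t '' ↑e) - sInf (t '' ↑e)

section LinkedIntervals

variable {lo hi : ℕ → ℝ} {δ : ℝ} {r : ℕ}

theorem add_succ_mul_le_of_linked (hstep : ∀ k < r, lo k + δ ≤ hi k)
    (hlink : ∀ k, k + 1 < r → hi k = lo (k + 1)) (j d : ℕ) (h : j + d < r) :
    lo j + (d + 1) * δ ≤ hi (j + d) := by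
  induction d with
  | zero => simpa using hstep j h
  | succ d ih =>
    have hprev := ih (by omega)
    have hnext : lo (j + d + 1) + δ ≤ hi (j + (d + 1)) := hstep _ h
    rw [hlink (j + d) (by omega)] at hprev
    push_cast
    linarith

theorem mem_Icc_of_linked (hstep : ∀ k < r, lo k + δ ≤ hi k)
    (hlink : ∀ k, k + 1 < r → hi k = lo (k + 1)) (h0 : 0 ≤ lo 0) (h1 : hi (r - 1) ≤ 1)
    {k : ℕ} (hk : k + 1 < r) :
    hi k ∈ Set.Icc (((k : ℝ) + 1) * δ) (1 - ((r : ℝ) - ((k : ℝ) + 1)) * δ) := by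
  constructor
  · have := add_succ_mul_le_of_linked hstep hlink 0 k (by omega)
    rw [zero_add] at this
    linarith
  · have := add_succ_mul_le_of_linked hstep hlink (k + 1) (r - (k + 2)) (by omega)
    rw [← hlink k hk, show k + 1 + (r - (k + 2)) = r - 1 by omega,
      Nat.cast_sub (by omega : k + 2 ≤ r)] at this
    push_cast at this
    linarith

end LinkedIntervals

theorem IsConflictingChain.isGreatest_isLeast {V : Type*} [DecidableEq V] {r : ℕ}
    {t : V → ℝ} {f : ℕ → Finset V} (hconf : IsConflictingChain r t f) {i : ℕ} (hi : i + 1 < r)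
    {x : V} (hx : f i ∩ f (i + 1) = {x}) :
    IsGreatest (t '' ↑(f i)) (t x) ∧ IsLeast (t '' ↑(f (i + 1))) (t x) := by
  obtain ⟨v, hv, hv', hmax, hmin⟩ := hconf i hi
  obtain rfl : v = x := by simpa [hx] using Finset.mem_inter.mpr ⟨hv, hv'⟩
  refine ⟨⟨⟨v, hv, rfl⟩, ?_⟩, ⟨⟨v, hv', rfl⟩, ?_⟩⟩ <;> rintro _ ⟨w, hw, rfl⟩
  exacts [hmax w hw, hmin w hw]

theorem chain_intersection_birth_times_general (r : ℕ) (p : ℝ) (V : Type) [DecidableEq V]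
    (t : V → ℝ) (ht01 : ∀ v, t v ∈ Set.Icc (0 : ℝ) 1)
    (f : ℕ → Finset V) (hconf : IsConflictingChain r t f)
    (x : ℕ → V) (hx : ∀ i, i + 1 < r → f i ∩ f (i + 1) = {x i})
    (hlen : ∀ i < r, (1 - p) / r ≤ edgeLength t (f i)) :
    ∀ i, i + 1 < r →
      t (x i) ∈ Set.Icc
        (((i : ℝ) + 1) * (1 - p) / r)
        ((((i : ℝ) + 1) + ((r : ℝ) - ((i : ℝ) + 1)) * p) / r) := by
  intro i hi
  have hext k (hk : k + 1 < r) := hconf.isGreatest_isLeast hk (hx k hk)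
  have hlast : (t '' ↑(f (r - 1))).Nonempty := by
    simpa [show r - 2 + 1 = r - 1 by omega] using (hext (r - 2) (by omega)).2.nonempty
  have hbounds := mem_Icc_of_linked (lo := fun k ↦ sInf (t '' ↑(f k)))
    (hi := fun k ↦ sSup (t '' ↑(f k))) (fun k hk ↦ le_sub_iff_add_le'.mp (hlen k hk))
    (fun k hk ↦ (hext k hk).1.csSup_eq.trans (hext k hk).2.csInf_eq.symm)
    (le_csInf (hext 0 (by omega)).1.nonempty (by rintro _ ⟨v, -, rfl⟩; exact (ht01 v).1))
    (csSup_le hlast (by rintro _ ⟨v, -, rfl⟩; exact (ht01 v).2)) hi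
  have hr : (r : ℝ) ≠ 0 := Nat.cast_ne_zero.mpr (by omega)
  rw [(hext i hi).1.csSup_eq] at hbounds
  convert hbounds using 2
  · rw [mul_div_assoc]
  · field_simp
    ring

/-- Suppose `(f 0, …, f (r-1))` is a conflicting `r`-chain under an injective
`t : V → [0,1]`, with `f i ∩ f (i+1) = {x i}`, and every edge of the chain has
length at least `(1-p)/r`.  Then each `t (x i)` lies in the interval
`[((i+1) − (i+1)p)/r, ((i+1) + (r−(i+1))p)/r]` (here `x i` is the paper's
`x_{i+1}`, `i = 0, …, r-2`). -/
theorem chain_intersection_birth_times (r n : ℕ) (hr : 2 ≤ r) (hn : 2 ≤ n)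
    (p : ℝ) (hp : p ∈ Set.Ioo (0 : ℝ) 1)
    (V : Type) [DecidableEq V] (E : Finset (Finset V)) (hE : ∀ e ∈ E, e.card = n)
    (t : V → ℝ) (ht : Function.Injective t) (ht01 : ∀ v, t v ∈ Set.Icc (0 : ℝ) 1)
    (f : ℕ → Finset V) (hchain : IsRChain r E f) (hconf : IsConflictingChain r t f)
    (x : ℕ → V) (hx : ∀ i, i + 1 < r → f i ∩ f (i + 1) = {x i})
    (hlen : ∀ i < r, (1 - p) / r ≤ edgeLength t (f i)) :
    ∀ i, i + 1 < r →
      t (x i) ∈ Set.Icc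
        (((i : ℝ) + 1) * (1 - p) / r)
        ((((i : ℝ) + 1) + ((r : ℝ) - ((i : ℝ) + 1)) * p) / r) :=
  chain_intersection_birth_times_general r p V t ht01 f hconf x hx hlen
end

section
/- Let r ≥ 2, n ≥ 3 be integers, let p ∈ (0,1), let (f_1,…,f_r) be an r-chain of n-element edges with f_i ∩ f_{i+1} = {x_i}, and let (t_v) be independent random variables uniformly distributed on [0,1], indexed by the vertices of f_1 ∪ … ∪ f_r. Then the probability that the chain is conflicting under t and t(x_i) ∈ [(i − i·p)/r, (i + (r−i)·p)/r] for every i = 1,…,r−1 is at most p^(r−1) · r^(−r·(n−2)). -/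
/-!
Split the birth times into those of the joints `x i` and those of all other vertices. Once the
joint times are fixed, every non-joint vertex of `f i` (there are at least `n - 2` of them) must
have its birth time in the gap between `t (x (i - 1))` and `t (x i)`, with `0` and `1` as the
outer ends. The `r` gaps have total length `1`, so by AM-GM the conditional probability is at
most `∏ gapᵢ ^ (n - 2) ≤ r ^ (-r (n - 2))`, uniformly in the joint times. By Fubini it remains
to integrate over the joint times, which lie in `r - 1` prescribed intervals of length `p`.
-/

open MeasureTheory

open Finset
open scoped ENNReal

theorem Real.prod_le_arith_mean_pow {ι : Type*} (s : Finset ι) (z : ι → ℝ) (hz : ∀ i ∈ s, 0 ≤ z i) :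
    ∏ i ∈ s, z i ≤ ((∑ i ∈ s, z i) / #s) ^ #s := by
  rcases s.eq_empty_or_nonempty with rfl | hs
  · simp
  have hcard : (0 : ℝ) < #s := by exact_mod_cast hs.card_pos
  have amgm := Real.geom_mean_le_arith_mean_weighted s (fun _ => (#s : ℝ)⁻¹) z
    (fun _ _ => by positivity) (by simp [hcard.ne']) hz
  rw [Real.finsetProd_rpow s z hz, ← Finset.mul_sum, inv_mul_eq_div] at amgm
  calc ∏ i ∈ s, z i = ((∏ i ∈ s, z i) ^ (#s : ℝ)⁻¹) ^ #s := by
        rw [← Real.rpow_natCast, ← Real.rpow_mul (prod_nonneg hz), inv_mul_cancel₀ hcard.ne',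
          Real.rpow_one]
    _ ≤ ((∑ i ∈ s, z i) / #s) ^ #s := by
        gcongr
        exact Real.rpow_nonneg (prod_nonneg hz) _

theorem ENNReal.prod_ofReal_le_arith_mean_pow {ι : Type*} (s : Finset ι) (z : ι → ℝ) :
    ∏ i ∈ s, ENNReal.ofReal (z i) ≤ ENNReal.ofReal (((∑ i ∈ s, z i) / #s) ^ #s) := by
  by_cases hz : ∀ i ∈ s, 0 ≤ z i
  · rw [← ENNReal.ofReal_prod_of_nonneg hz]
    exact ENNReal.ofReal_le_ofReal (Real.prod_le_arith_mean_pow s z hz)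
  · obtain ⟨i, hi, hneg⟩ : ∃ i ∈ s, z i < 0 := by simpa using hz
    rw [prod_eq_zero hi (ENNReal.ofReal_eq_zero.2 hneg.le)]
    exact zero_le

theorem ENNReal.prod_le_prod_pow_of_pairwiseDisjoint {α ι : Type*} [DecidableEq α]
    {m : α → ℝ≥0∞} {t : Finset α} {s : Finset ι} {B : ι → Finset α} {c : ι → ℝ≥0∞} {k : ℕ}
    (hm : ∀ a ∈ t, m a ≤ 1) (hB : ∀ i ∈ s, B i ⊆ t) (hdisj : (s : Set ι).PairwiseDisjoint B)
    (hk : ∀ i ∈ s, k ≤ #(B i)) (hc : ∀ i ∈ s, ∀ a ∈ B i, m a ≤ c i) :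
    ∏ a ∈ t, m a ≤ ∏ i ∈ s, c i ^ k := by
  calc ∏ a ∈ t, m a ≤ ∏ a ∈ s.biUnion B, m a :=
        prod_le_prod_of_subset_of_le_one' (biUnion_subset.2 hB) fun a ha _ => hm a ha
    _ = ∏ i ∈ s, ∏ a ∈ B i, m a := prod_biUnion hdisj
    _ ≤ ∏ i ∈ s, min (c i) 1 ^ #(B i) := by
        gcongr with i hi
        exact prod_le_pow_card _ _ _ fun a ha => le_min (hc i hi a ha) (hm a (hB i hi ha))
    _ ≤ ∏ i ∈ s, c i ^ k := prod_le_prod' fun i hi =>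
        (pow_le_pow_right_of_le_one' (min_le_right (c i) 1) (hk i hi)).trans
          (pow_le_pow_left' (min_le_left _ _) k)

theorem volume_restrict_Icc_zero_one_le {s : Set ℝ} {c d : ℝ}
    (h : s ∩ Set.Icc 0 1 ⊆ Set.Icc c d) :
    volume.restrict (Set.Icc (0 : ℝ) 1) s ≤ ENNReal.ofReal (d - c) := by
  rw [Measure.restrict_apply' measurableSet_Icc, ← Real.volume_Icc]
  exact measure_mono h

theorem MeasureTheory.Measure.prod_apply_le_mul_of_slice_le {α β : Type*} [MeasurableSpace α]
    [MeasurableSpace β] (μ : Measure α) (ν : Measure β) {B : Set (α × β)} (hB : MeasurableSet B)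
    (G : Set α) (C : ℝ≥0∞) (hG : ∀ z ∈ B, z.1 ∈ G)
    (hC : ∀ z ∈ B, ν (Prod.mk z.1 ⁻¹' B) ≤ C) :
    μ.prod ν B ≤ C * μ G := by
  have slice_le : ∀ a, ν (Prod.mk a ⁻¹' B) ≤ G.indicator (fun _ => C) a := by
    intro a
    rcases (Prod.mk a ⁻¹' B).eq_empty_or_nonempty with h | ⟨b, hb⟩
    · simp [h]
    · simpa [hG (a, b) hb] using hC (a, b) hb
  calc μ.prod ν B ≤ ∫⁻ a, ν (Prod.mk a ⁻¹' B) ∂μ := Measure.prod_apply_le hB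
    _ ≤ ∫⁻ a, G.indicator (fun _ => C) a ∂μ := lintegral_mono slice_le
    _ ≤ C * μ G := lintegral_indicator_const_le G C

theorem MeasureTheory.Measure.pi_le_mul_of_slice_le {ι : Type*} [Fintype ι] {α : ι → Type*}
    [∀ i, MeasurableSpace (α i)] (μ : ∀ i, Measure (α i)) [∀ i, SigmaFinite (μ i)]
    (p : ι → Prop) [DecidablePred p] [Fintype (Subtype p)] {A : Set (∀ i, α i)}
    (hA : MeasurableSet A)
    (G : Set (∀ i : Subtype p, α i)) (C : ℝ≥0∞) (hG : ∀ t ∈ A, (fun i : Subtype p => t i) ∈ G)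
    (hC : ∀ t ∈ A, Measure.pi (fun i : {i // ¬p i} => μ i)
      {b | (fun i => if h : p i then t i else b ⟨i, h⟩) ∈ A} ≤ C) :
    Measure.pi μ A ≤ C * Measure.pi (fun i : Subtype p => μ i) G := by
  -- the instance is a parameter so that `Finset.Subtype.fintype` is accepted for `p = (· ∈ s)`
  obtain rfl : ‹Fintype (Subtype p)› = Subtype.fintype p := Subsingleton.elim _ _
  set e := MeasurableEquiv.piEquivPiSubtypeProd α p
  have he : ∀ z, (fun i : Subtype p => e.symm z i) = z.1 := fun z => by
    ext i; simp [e, i.2]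
  rw [← (measurePreserving_piEquivPiSubtypeProd μ p).symm.measure_preimage_equiv A]
  refine Measure.prod_apply_le_mul_of_slice_le _ _ (e.symm.measurable hA) G C
    (fun z hz => he z ▸ hG _ hz) (fun z hz => ?_)
  convert hC _ hz using 2
  ext b
  simp +contextual [e]

section ChainEvent

variable {V : Type*} {r : ℕ} {f : ℕ → Finset V} {x : ℕ → V}

def chainEvent (r : ℕ) (f : ℕ → Finset V) (x : ℕ → V) (J : ℕ → Set ℝ) : Set (V → ℝ) :=
  {t | ∀ i, i + 1 < r → (∀ w ∈ f i, t w ≤ t (x i)) ∧ (∀ w ∈ f (i + 1), t (x i) ≤ t w) ∧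
    t (x i) ∈ J i}

theorem measurableSet_chainEvent [Countable V] {J : ℕ → Set ℝ}
    (hJ : ∀ i, MeasurableSet (J i)) : MeasurableSet (chainEvent r f x J) := by
  have hle : ∀ v w : V, Measurable fun t : V → ℝ => t v ≤ t w := fun v w =>
    measurableSet_setOfPred.1 (measurableSet_le (measurable_pi_apply v) (measurable_pi_apply w))
  refine Measurable.setOf (Measurable.forall fun i => Measurable.imp measurable_const
    (Measurable.and ?_ (Measurable.and ?_ ?_)))
  · exact Measurable.forall fun w => Measurable.imp measurable_const (hle w (x i))
  · exact Measurable.forall fun w => Measurable.imp measurable_const (hle (x i) w)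
  · exact measurableSet_setOfPred.1 (measurable_pi_apply (x i) (hJ i))

def gapEnd (r : ℕ) (x : ℕ → V) (t : V → ℝ) (j : ℕ) : ℝ :=
  if j = 0 then 0 else if j < r then t (x (j - 1)) else 1

theorem sum_range_gapEnd_sub (hr : 0 < r) (t : V → ℝ) :
    ∑ i ∈ range r, (gapEnd r x t (i + 1) - gapEnd r x t i) = 1 := by
  rw [sum_range_sub (gapEnd r x t)]
  simp [gapEnd, hr.ne']

theorem gapEnd_congr {t t' : V → ℝ} (h : ∀ i, i + 1 < r → t (x i) = t' (x i)) :
    gapEnd r x t = gapEnd r x t' := by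
  ext j
  unfold gapEnd
  split_ifs with h0 hj
  · rfl
  · exact h _ (by omega)
  · rfl

theorem mem_Icc_gapEnd_of_mem_chainEvent {J : ℕ → Set ℝ} {t : V → ℝ}
    (ht : t ∈ chainEvent r f x J) {i : ℕ} (hi : i < r) {w : V} (hw : w ∈ f i)
    (hw01 : t w ∈ Set.Icc 0 1) : t w ∈ Set.Icc (gapEnd r x t i) (gapEnd r x t (i + 1)) := by
  constructor
  · unfold gapEnd
    split_ifs with h0
    · exact hw01.1
    · obtain ⟨j, rfl⟩ : ∃ j, i = j + 1 := ⟨i - 1, by omega⟩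
      exact (ht j hi).2.1 w hw
  · rw [gapEnd, if_neg i.succ_ne_zero, Nat.add_sub_cancel]
    split_ifs with hi'
    · exact (ht i hi').1 w hw
    · exact hw01.2

end ChainEvent

section EdgeChain

variable {V : Type*} [DecidableEq V] {r : ℕ} {f : ℕ → Finset V} {x : ℕ → V}

structure IsEdgeChain (r : ℕ) (f : ℕ → Finset V) (x : ℕ → V) : Prop where
  inter_eq_empty : ∀ i j, j < r → i + 1 < j → f i ∩ f j = ∅
  inter_succ_eq : ∀ i, i + 1 < r → f i ∩ f (i + 1) = {x i}

def chainJoints (r : ℕ) (x : ℕ → V) : Finset V := (range (r - 1)).image x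

theorem mem_chainJoints {v : V} : v ∈ chainJoints r x ↔ ∃ i, i + 1 < r ∧ x i = v := by
  simp only [chainJoints, mem_image, mem_range]
  exact exists_congr fun i => and_congr_left' (by omega)

namespace IsEdgeChain

theorem joint_mem_and_mem_succ (hc : IsEdgeChain r f x) {i : ℕ} (hi : i + 1 < r) :
    x i ∈ f i ∧ x i ∈ f (i + 1) :=
  mem_inter.1 (hc.inter_succ_eq i hi ▸ mem_singleton_self (x i))

theorem eq_or_succ_eq_of_joint_mem (hc : IsEdgeChain r f x) {i j : ℕ} (hi : i < r)
    (hj : j + 1 < r) (h : x j ∈ f i) : j = i ∨ j + 1 = i := by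
  obtain ⟨hj₀, hj₁⟩ := hc.joint_mem_and_mem_succ hj
  by_contra hne
  rcases Nat.lt_or_ge j i with hji | hij
  · have := hc.inter_eq_empty j i hi (by omega)
    exact notMem_empty (x j) (this ▸ mem_inter.2 ⟨hj₀, h⟩)
  · have := hc.inter_eq_empty i (j + 1) hj (by omega)
    exact notMem_empty (x j) (this ▸ mem_inter.2 ⟨h, hj₁⟩)

theorem card_chainJoints (hc : IsEdgeChain r f x) : #(chainJoints r x) = r - 1 := by
  rw [chainJoints, card_image_of_injOn, card_range]
  intro i hi j hj hij
  simp only [coe_range, Set.mem_Iio] at hi hj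
  have h₁ := hc.eq_or_succ_eq_of_joint_mem (i := i) (by omega) (by omega)
    (hij ▸ (hc.joint_mem_and_mem_succ (by omega)).1)
  have h₂ := hc.eq_or_succ_eq_of_joint_mem (i := i + 1) (by omega) (by omega)
    (hij ▸ (hc.joint_mem_and_mem_succ (by omega)).2)
  omega

theorem card_sub_two_le_card_sdiff_chainJoints (hc : IsEdgeChain r f x) {i : ℕ} (hi : i < r) :
    #(f i) - 2 ≤ #(f i \ chainJoints r x) := by
  have hsub : f i ∩ chainJoints r x ⊆ {x (i - 1), x i} := by
    intro v hv
    obtain ⟨hvf, hvX⟩ := mem_inter.1 hv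
    obtain ⟨j, hj, rfl⟩ := mem_chainJoints.1 hvX
    rcases hc.eq_or_succ_eq_of_joint_mem hi hj hvf with rfl | rfl <;> simp
  have := card_sdiff_add_card_inter (f i) (chainJoints r x)
  have := (card_le_card hsub).trans card_le_two
  omega

theorem pairwiseDisjoint_sdiff_chainJoints (hc : IsEdgeChain r f x) :
    (range r : Set ℕ).PairwiseDisjoint fun i => f i \ chainJoints r x := by
  suffices h : ∀ i j, i < j → j < r → Disjoint (f i \ chainJoints r x) (f j \ chainJoints r x) by
    intro i hi j hj hij
    simp only [coe_range, Set.mem_Iio] at hi hj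
    rcases Nat.lt_or_gt_of_ne hij with hij | hji
    · exact h i j hij hj
    · exact (h j i hji hi).symm
  intro i j hij hj
  rw [disjoint_left]
  intro v hvi hvj
  obtain ⟨hvfi, hvX⟩ := mem_sdiff.1 hvi
  have hvij : v ∈ f i ∩ f j := mem_inter.2 ⟨hvfi, (mem_sdiff.1 hvj).1⟩
  rcases Nat.lt_or_ge (i + 1) j with hfar | hnext
  · rw [hc.inter_eq_empty i j hj hfar] at hvij
    exact notMem_empty v hvij
  · obtain rfl : j = i + 1 := by omega
    rw [hc.inter_succ_eq i hj, mem_singleton] at hvij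
    exact hvX (mem_chainJoints.2 ⟨i, hj, hvij.symm⟩)

variable [Fintype V]

theorem pi_slice_chainEvent_le (hc : IsEdgeChain r f x) (hr : 0 < r) {n : ℕ}
    (hn : ∀ i < r, n ≤ #(f i)) (J : ℕ → Set ℝ) (t : V → ℝ) :
    Measure.pi (fun _ : {v // v ∉ chainJoints r x} => volume.restrict (Set.Icc (0 : ℝ) 1))
      {b | (fun v => if h : v ∈ chainJoints r x then t v else b ⟨v, h⟩) ∈ chainEvent r f x J}
      ≤ ENNReal.ofReal ((r : ℝ)⁻¹ ^ r) ^ (n - 2) := by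
  set X := chainJoints r x
  set e := gapEnd r x t
  set T : V → Set ℝ := fun v =>
    {s | ∀ i < r, v ∈ f i → s ∈ Set.Icc 0 1 → s ∈ Set.Icc (e i) (e (i + 1))}
  have hslice : {b : {v // v ∉ X} → ℝ |
      (fun v => if h : v ∈ X then t v else b ⟨v, h⟩) ∈ chainEvent r f x J} ⊆
      Set.univ.pi fun w => T w := by
    intro b hb w _ i hi hw hw01
    have he : gapEnd r x (fun v => if h : v ∈ X then t v else b ⟨v, h⟩) = e :=
      gapEnd_congr fun k hk => dif_pos (mem_chainJoints.2 ⟨k, hk, rfl⟩)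
    simpa [w.2, he] using mem_Icc_gapEnd_of_mem_chainEvent hb hi hw (by simpa [w.2] using hw01)
  calc _ ≤ _ := measure_mono hslice
    _ = ∏ w : {v // v ∉ X}, volume.restrict (Set.Icc (0 : ℝ) 1) (T w) := Measure.pi_pi _ _
    _ = ∏ v ∈ Xᶜ, volume.restrict (Set.Icc (0 : ℝ) 1) (T v) := by
        rw [prod_subtype Xᶜ fun _ => mem_compl]
    _ ≤ ∏ i ∈ range r, ENNReal.ofReal (e (i + 1) - e i) ^ (n - 2) := by
        refine ENNReal.prod_le_prod_pow_of_pairwiseDisjoint (fun v _ => ?_) (fun i _ => ?_)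
          hc.pairwiseDisjoint_sdiff_chainJoints (fun i hi => ?_) (fun i hi v hv => ?_)
        · simpa using volume_restrict_Icc_zero_one_le (s := T v) Set.inter_subset_right
        · exact fun v hv => mem_compl.2 (mem_sdiff.1 hv).2
        · have := hc.card_sub_two_le_card_sdiff_chainJoints (mem_range.1 hi)
          have := hn i (mem_range.1 hi)
          omega
        · exact volume_restrict_Icc_zero_one_le fun s hs =>
            hs.1 i (mem_range.1 hi) (mem_sdiff.1 hv).1 hs.2
    _ = (∏ i ∈ range r, ENNReal.ofReal (e (i + 1) - e i)) ^ (n - 2) := prod_pow _ _ _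
    _ ≤ ENNReal.ofReal ((r : ℝ)⁻¹ ^ r) ^ (n - 2) := by
        gcongr
        refine (ENNReal.prod_ofReal_le_arith_mean_pow (range r) fun i => e (i + 1) - e i).trans_eq ?_
        rw [sum_range_gapEnd_sub hr, card_range, one_div, inv_pow]

theorem birthTimeMeasure_chainEvent_le (hc : IsEdgeChain r f x) (hr : 0 < r) {n : ℕ}
    (hn : ∀ i < r, n ≤ #(f i)) {J : ℕ → Set ℝ} (hJ : ∀ i, MeasurableSet (J i)) {q : ℝ≥0∞}
    (hq : ∀ i, i + 1 < r → volume.restrict (Set.Icc (0 : ℝ) 1) (J i) ≤ q) :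
    birthTimeMeasure V (chainEvent r f x J) ≤
      q ^ (r - 1) * ENNReal.ofReal ((r : ℝ)⁻¹ ^ r) ^ (n - 2) := by
  set X := chainJoints r x
  set G : Set ({v // v ∈ X} → ℝ) :=
    Set.univ.pi fun j => {s | ∀ i, i + 1 < r → x i = j → s ∈ J i}
  have hG : Measure.pi (fun _ : {v // v ∈ X} => volume.restrict (Set.Icc (0 : ℝ) 1)) G ≤
      q ^ (r - 1) := by
    rw [Measure.pi_pi]
    refine (prod_le_pow_card _ _ q fun j _ => ?_).trans_eq ?_
    · obtain ⟨i, hi, hxi⟩ := mem_chainJoints.1 j.2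
      refine (measure_mono ?_).trans (hq i hi)
      exact fun s hs => hs i hi hxi
    · rw [card_univ, Fintype.card_coe, hc.card_chainJoints]
  refine (Measure.pi_le_mul_of_slice_le _ (· ∈ X) (measurableSet_chainEvent hJ) G _
    (fun t ht j _ i hi hxi => show t j ∈ J i from hxi ▸ (ht i hi).2.2)
    (fun t _ => hc.pi_slice_chainEvent_le hr hn J t)).trans ?_
  rw [mul_comm]
  gcongr

end IsEdgeChain

end EdgeChain

theorem chain_conflict_probability_general (r n : ℕ) (hr : 2 ≤ r)
    (p : ℝ) (hp : p ∈ Set.Ioo (0 : ℝ) 1)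
    (V : Type) [Fintype V] [DecidableEq V]
    (f : ℕ → Finset V) (hcard : ∀ i < r, (f i).card = n)
    (hdisj : ∀ i j, j < r → i + 1 < j → f i ∩ f j = ∅)
    (x : ℕ → V) (hx : ∀ i, i + 1 < r → f i ∩ f (i + 1) = {x i}) :
    birthTimeMeasure V
      {t : V → ℝ | ∀ i, i + 1 < r →
        (∀ w ∈ f i, t w ≤ t (x i)) ∧ (∀ w ∈ f (i + 1), t (x i) ≤ t w) ∧
        t (x i) ∈ Set.Icc (((i : ℝ) + 1) * (1 - p) / r)
          ((((i : ℝ) + 1) + ((r : ℝ) - ((i : ℝ) + 1)) * p) / r)}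
      ≤ ENNReal.ofReal (p ^ (r - 1) * ((r : ℝ) ^ (r * (n - 2)))⁻¹) := by
  calc _ ≤ ENNReal.ofReal p ^ (r - 1) * ENNReal.ofReal ((r : ℝ)⁻¹ ^ r) ^ (n - 2) :=
        IsEdgeChain.birthTimeMeasure_chainEvent_le ⟨hdisj, hx⟩ (by omega)
          (fun i hi => (hcard i hi).ge) (fun _ => measurableSet_Icc) fun i _ =>
            (volume_restrict_Icc_zero_one_le Set.inter_subset_left).trans_eq
              (by congr 1; field_simp; ring)
    _ = _ := by
        have hr_inv : (0 : ℝ) ≤ (r : ℝ)⁻¹ ^ r := by positivity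
        rw [← ENNReal.ofReal_pow hp.1.le, ← ENNReal.ofReal_pow hr_inv,
          ← ENNReal.ofReal_mul (pow_nonneg hp.1.le _), ← pow_mul, inv_pow]

/-- Let `(f 0, …, f (r-1))` be an `r`-chain of `n`-element edges with
`f i ∩ f (i+1) = {x i}`, and let the birth times of the vertices be independent
and uniform on `[0,1]`.  The probability that the chain is conflicting (each
`x i` has the largest birth time in `f i` and the smallest one in `f (i+1)`) and
every `t (x i)` lies in `[((i+1) − (i+1)p)/r, ((i+1) + (r−(i+1))p)/r]` is at most
`p^(r-1) · r^(-r(n-2))` (here `x i` is the paper's `x_{i+1}`, `i = 0, …, r-2`). -/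
theorem chain_conflict_probability (r n : ℕ) (hr : 2 ≤ r) (hn : 3 ≤ n)
    (p : ℝ) (hp : p ∈ Set.Ioo (0 : ℝ) 1)
    (V : Type) [Fintype V] [DecidableEq V]
    (f : ℕ → Finset V) (hcard : ∀ i < r, (f i).card = n)
    (hinter : ∀ i, i + 1 < r → (f i ∩ f (i + 1)).card = 1)
    (hdisj : ∀ i j, j < r → i + 1 < j → f i ∩ f j = ∅)
    (x : ℕ → V) (hx : ∀ i, i + 1 < r → f i ∩ f (i + 1) = {x i}) :
    birthTimeMeasure V
      {t : V → ℝ | ∀ i, i + 1 < r →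
        (∀ w ∈ f i, t w ≤ t (x i)) ∧ (∀ w ∈ f (i + 1), t (x i) ≤ t w) ∧
        t (x i) ∈ Set.Icc (((i : ℝ) + 1) * (1 - p) / r)
          ((((i : ℝ) + 1) + ((r : ℝ) - ((i : ℝ) + 1)) * p) / r)}
      ≤ ENNReal.ofReal (p ^ (r - 1) * ((r : ℝ) ^ (r * (n - 2)))⁻¹) :=
  chain_conflict_probability_general r n hr p hp V f hcard hdisj x hx
end

section
/- Let r ≥ 2 be an integer and let H = (V,E) be an n-uniform hypergraph in which every edge intersects at most D other edges (D ≥ 1). Then: (i) every edge of H intersects at most r·D^r distinct r-chains of H; (ii) every r-chain of H intersects at most r·D edges of H; and (iii) every r-chain of H intersects at most r²·D^r other r-chains of H. -/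
/-!
Write `N(e)` (`adjEdges E e`) for the edges other than `e` meeting `e`, so `|N(e)| ≤ D`. If
edges have at least two vertices, consecutive edges of a chain are distinct, hence neighbours,
so every edge meeting a chain is adjacent to one of its edges. A chain whose `i`-th edge lies in
a set `A` is determined by walking outwards from position `i`, each step choosing one of at most
`D` neighbours of the previous edge; this leaves at most `|A| · D ^ (r - 1)` chains. Taking
`A = N(e)` and summing over the `r` positions (and, for two chains, over the `r` edges of the
second one) gives the three bounds. If edges have at most one vertex, consecutive edges of a
chain coincide, chains are constant, and everything is controlled by `N(e) ∪ {e}`.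
-/

/-- `f : Fin r → Finset V` is an `r`-chain of edges of `E`: consecutive edges meet
in exactly one vertex and non-consecutive edges are disjoint. -/
def IsRChainFin {V : Type*} [DecidableEq V] (r : ℕ) (E : Finset (Finset V))
    (f : Fin r → Finset V) : Prop :=
  (∀ i, f i ∈ E) ∧
  (∀ i j : Fin r, (i : ℕ) + 1 = (j : ℕ) → (f i ∩ f j).card = 1) ∧
  (∀ i j : Fin r, (i : ℕ) + 1 < (j : ℕ) → f i ∩ f j = ∅)

open Finset

variable {α ι V : Type*}

theorem ncard_le_of_forall_mem_parent [Fintype ι] (N : α → Finset α) {s : Set α} {D : ℕ}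
    (hN : ∀ x ∈ s, (N x).card ≤ D) (A : Finset α) {root : ι} {parent : ι → ι}
    (depth : ι → ℕ) (hdepth : ∀ j ≠ root, depth (parent j) < depth j) {S : Set (ι → α)}
    (hS : ∀ f ∈ S, f root ∈ A ∧ (∀ j, f j ∈ s) ∧ ∀ j ≠ root, f j ∈ N (f (parent j))) :
    S.ncard ≤ A.card * D ^ (Fintype.card ι - 1) := by
  classical
  let code (f : ι → α) : α × ({j // j ≠ root} → ℕ) :=
    (f root, fun j => (N (f (parent j))).toList.idxOf (f j))
  let codes : Finset (α × ({j // j ≠ root} → ℕ)) := A ×ˢ Fintype.piFinset fun _ => range D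
  have hmaps : ∀ f ∈ S, code f ∈ (codes : Set _) := by
    intro f hf
    obtain ⟨hroot, hs, hpar⟩ := hS f hf
    simp only [codes, coe_product, Set.mem_prod, mem_coe, Fintype.mem_piFinset, mem_range]
    refine ⟨hroot, fun j => ?_⟩
    calc _ < (N (f (parent j))).toList.length :=
          List.idxOf_lt_length_iff.2 (mem_toList.2 (hpar j j.2))
      _ ≤ D := (length_toList _).trans_le (hN _ (hs _))
  have hinj : Set.InjOn code S := by
    intro f hf g hg hfg
    obtain ⟨hroot, hidx⟩ := Prod.ext_iff.1 hfg
    funext j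
    induction hj : depth j using Nat.strong_induction_on generalizing j with
    | _ m ih =>
      by_cases hjr : j = root
      · subst hjr; exact hroot
      · have hp : f (parent j) = g (parent j) := ih _ (hj ▸ hdepth j hjr) _ rfl
        have hpos := congrFun hidx ⟨j, hjr⟩
        simp only [code, hp] at hpos
        exact (List.idxOf_inj (mem_toList.2 (hp ▸ (hS f hf).2.2 j hjr))).1 hpos
  calc S.ncard ≤ _ := Set.ncard_le_ncard_of_injOn code hmaps hinj
    _ = _ := by
      rw [Set.ncard_coe_finset, card_product, Fintype.card_piFinset]
      simp [Fintype.card_subtype_compl]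

theorem ncard_le_of_forall_mem_consecutive {r : ℕ} (N : α → Finset α) {s : Set α} {D : ℕ}
    (hN : ∀ x ∈ s, (N x).card ≤ D) (A : Finset α) (i : Fin r) {S : Set (Fin r → α)}
    (hS : ∀ f ∈ S, f i ∈ A ∧ (∀ j, f j ∈ s) ∧
      ∀ a b : Fin r, (a : ℕ) + 1 = b → f a ∈ N (f b) ∧ f b ∈ N (f a)) :
    S.ncard ≤ A.card * D ^ (r - 1) := by
  let towards (j : Fin r) : Fin r :=
    if h : j < i then ⟨j + 1, by omega⟩ else if h' : i < j then ⟨j - 1, by omega⟩ else j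
  have hdist :
      ∀ j ≠ i, (i - towards j : ℕ) + (towards j - i : ℕ) < (i - j : ℕ) + (j - i : ℕ) := by
    intro j hj
    have : (j : ℕ) ≠ i := Fin.val_ne_of_ne hj
    simp only [towards]
    split_ifs <;> (try dsimp only) <;> omega
  simpa using ncard_le_of_forall_mem_parent N hN A (parent := towards)
      (fun j => (i - j : ℕ) + (j - i : ℕ)) hdist fun f hf => by
    obtain ⟨hfi, hs, hstep⟩ := hS f hf
    refine ⟨hfi, hs, fun j hj => ?_⟩
    have : (j : ℕ) ≠ i := Fin.val_ne_of_ne hj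
    simp only [towards]
    split_ifs
    · exact (hstep j _ rfl).1
    · exact (hstep _ j (Nat.sub_add_cancel (by omega))).2
    · omega

theorem Set.ncard_le_sum_of_subset_iUnion [Fintype ι] {S : Set α} {s : ι → Set α}
    (hs : ∀ i, (s i).Finite) (hS : S ⊆ ⋃ i, s i) : S.ncard ≤ ∑ i, (s i).ncard :=
  (Set.ncard_le_ncard hS (Set.finite_iUnion hs)).trans (Set.ncard_iUnion_le_of_fintype s)

section Hypergraph

variable [DecidableEq V] {E : Finset (Finset V)} {r n : ℕ} {e x : Finset V}
  {f : Fin r → Finset V}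

def adjEdges (E : Finset (Finset V)) (e : Finset V) : Finset (Finset V) :=
  E.filter fun x => x ≠ e ∧ (e ∩ x).Nonempty

theorem coe_adjEdges :
    (adjEdges E e : Set (Finset V)) = {x | x ∈ E ∧ x ≠ e ∧ (e ∩ x).Nonempty} :=
  coe_filter _ _

theorem mem_adjEdges : x ∈ adjEdges E e ↔ x ∈ E ∧ x ≠ e ∧ (e ∩ x).Nonempty := mem_filter

theorem mem_adjEdges_comm (he : e ∈ E) (hx : x ∈ E) :
    x ∈ adjEdges E e ↔ e ∈ adjEdges E x := by
  simp only [mem_adjEdges, he, hx, ne_comm, inter_comm e x, true_and]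

theorem mem_insert_adjEdges (hx : x ∈ E) (hex : (e ∩ x).Nonempty) :
    x ∈ insert e (adjEdges E e) := by
  rcases eq_or_ne x e with rfl | hne
  · exact mem_insert_self x _
  · exact mem_insert_of_mem (mem_adjEdges.2 ⟨hx, hne, hex⟩)

theorem finite_setOf_isRChainFin_and (p : (Fin r → Finset V) → Prop) :
    {f | IsRChainFin r E f ∧ p f}.Finite :=
  (Set.Finite.pi' fun _ => E.finite_toSet).subset fun _ hf => hf.1.1

namespace IsRChainFin

theorem inter_nonempty (hf : IsRChainFin r E f) {a b : Fin r} (hab : (a : ℕ) + 1 = b) :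
    (f a ∩ f b).Nonempty :=
  card_pos.1 ((hf.2.1 a b hab).symm ▸ one_pos)

theorem mem_adjEdges_of_succ (hE : ∀ e ∈ E, e.card = n) (hn : 2 ≤ n)
    (hf : IsRChainFin r E f) {a b : Fin r} (hab : (a : ℕ) + 1 = b) :
    f a ∈ adjEdges E (f b) ∧ f b ∈ adjEdges E (f a) := by
  have hne : f b ≠ f a := by
    intro h
    have h1 := hf.2.1 a b hab
    rw [h, inter_self, hE _ (hf.1 a)] at h1
    omega
  have hba : f b ∈ adjEdges E (f a) := mem_adjEdges.2 ⟨hf.1 b, hne, hf.inter_nonempty hab⟩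
  exact ⟨(mem_adjEdges_comm (hf.1 a) (hf.1 b)).1 hba, hba⟩

-- An edge of the chain is itself adjacent to its successor or predecessor.
theorem exists_mem_adjEdges (hr : 2 ≤ r) (hE : ∀ e ∈ E, e.card = n) (hn : 2 ≤ n)
    (hf : IsRChainFin r E f) (he : e ∈ E) {i : Fin r} (hi : (e ∩ f i).Nonempty) :
    ∃ j, e ∈ adjEdges E (f j) := by
  rcases eq_or_ne e (f i) with rfl | hne
  · by_cases hlast : (i : ℕ) + 1 < r
    · exact ⟨⟨i + 1, hlast⟩, (hf.mem_adjEdges_of_succ hE hn rfl).1⟩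
    · exact ⟨⟨i - 1, by omega⟩, (hf.mem_adjEdges_of_succ hE hn (Nat.sub_add_cancel (by omega))).2⟩
  · exact ⟨i, mem_adjEdges.2 ⟨he, hne, by rwa [inter_comm]⟩⟩

theorem apply_eq_of_succ (hE : ∀ e ∈ E, e.card ≤ 1) (hf : IsRChainFin r E f) {a b : Fin r}
    (hab : (a : ℕ) + 1 = b) : f a = f b := by
  have h := hf.2.1 a b hab
  have ha := eq_of_subset_of_card_le inter_subset_left (h ▸ hE _ (hf.1 a))
  have hb := eq_of_subset_of_card_le inter_subset_right (h ▸ hE _ (hf.1 b))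
  rw [← ha, hb]

theorem apply_eq_apply (hE : ∀ e ∈ E, e.card ≤ 1) (hf : IsRChainFin r E f) (j k : Fin r) :
    f j = f k := by
  have h0 : ∀ j : Fin r, f j = f ⟨0, j.pos⟩ := by
    rintro ⟨m, hm⟩
    induction m with
    | zero => rfl
    | succ m ih =>
      exact (hf.apply_eq_of_succ hE (a := ⟨m, by omega⟩) rfl).symm.trans (ih (by omega))
  rw [h0 j, h0 k]

end IsRChainFin

end Hypergraph

section Counting

variable [DecidableEq V] {E : Finset (Finset V)} {r n D : ℕ} {e : Finset V}
  {g : Fin r → Finset V}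

theorem ncard_isRChainFin_apply_mem_le (hE : ∀ e ∈ E, e.card = n) (hn : 2 ≤ n)
    (hadj : ∀ e ∈ E, (adjEdges E e).card ≤ D) (i : Fin r) {A : Finset (Finset V)}
    (hA : A.card ≤ D) :
    {f | IsRChainFin r E f ∧ f i ∈ A}.ncard ≤ D ^ r := by
  calc _ ≤ A.card * D ^ (r - 1) :=
        ncard_le_of_forall_mem_consecutive (adjEdges E) hadj A i fun _ hf =>
          ⟨hf.2, hf.1.1, fun _ _ hab => hf.1.mem_adjEdges_of_succ hE hn hab⟩
    _ ≤ D * D ^ (r - 1) := Nat.mul_le_mul_right _ hA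
    _ = D ^ r := by rw [← pow_succ', Nat.sub_add_cancel i.pos]

theorem ncard_isRChainFin_apply_mem_le_card (hE : ∀ e ∈ E, e.card ≤ 1) (i : Fin r)
    (A : Finset (Finset V)) :
    {f | IsRChainFin r E f ∧ f i ∈ A}.ncard ≤ A.card := by
  simpa using ncard_le_of_forall_mem_consecutive (s := Set.univ) (D := 1) singleton (by simp) A i
    (S := {f | IsRChainFin r E f ∧ f i ∈ A}) fun f ⟨hf, hfi⟩ =>
      ⟨hfi, fun _ => trivial, fun a b _ => by simp [hf.apply_eq_apply hE a b]⟩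

theorem ncard_chains_meeting_edge_le_of_two_le (hr : 2 ≤ r) (hE : ∀ e ∈ E, e.card = n)
    (hn : 2 ≤ n) (hadj : ∀ e ∈ E, (adjEdges E e).card ≤ D) (he : e ∈ E) :
    {f : Fin r → Finset V | IsRChainFin r E f ∧ ∃ i, (e ∩ f i).Nonempty}.ncard ≤ r * D ^ r := by
  calc _ ≤ ∑ i : Fin r, {f | IsRChainFin r E f ∧ f i ∈ adjEdges E e}.ncard := by
        refine Set.ncard_le_sum_of_subset_iUnion (fun _ => finite_setOf_isRChainFin_and _) ?_
        rintro f ⟨hf, i, hi⟩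
        obtain ⟨j, hj⟩ := hf.exists_mem_adjEdges hr hE hn he hi
        exact Set.mem_iUnion.2 ⟨j, hf, (mem_adjEdges_comm (hf.1 j) he).1 hj⟩
    _ ≤ ∑ _i : Fin r, D ^ r :=
        sum_le_sum fun i _ => ncard_isRChainFin_apply_mem_le hE hn hadj i (hadj e he)
    _ = r * D ^ r := by simp

theorem ncard_edges_meeting_chain_le_of_two_le (hr : 2 ≤ r) (hE : ∀ e ∈ E, e.card = n)
    (hn : 2 ≤ n) (hadj : ∀ e ∈ E, (adjEdges E e).card ≤ D) (hg : IsRChainFin r E g) :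
    {x | x ∈ E ∧ ∃ i, (x ∩ g i).Nonempty}.ncard ≤ r * D := by
  calc _ ≤ ∑ i : Fin r, (adjEdges E (g i) : Set (Finset V)).ncard := by
        refine Set.ncard_le_sum_of_subset_iUnion (fun _ => finite_toSet _) ?_
        rintro x ⟨hx, i, hi⟩
        exact Set.mem_iUnion.2 (hg.exists_mem_adjEdges hr hE hn hx hi)
    _ ≤ ∑ _i : Fin r, D :=
        sum_le_sum fun i _ => (Set.ncard_coe_finset _).trans_le (hadj _ (hg.1 i))
    _ = r * D := by simp

theorem ncard_chains_meeting_chain_le_of_two_le (hr : 2 ≤ r) (hE : ∀ e ∈ E, e.card = n)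
    (hn : 2 ≤ n) (hadj : ∀ e ∈ E, (adjEdges E e).card ≤ D) (hg : IsRChainFin r E g) :
    {f : Fin r → Finset V | IsRChainFin r E f ∧ f ≠ g ∧
      ∃ i j, (f i ∩ g j).Nonempty}.ncard ≤ r ^ 2 * D ^ r := by
  calc _ ≤ ∑ p : Fin r × Fin r, {f | IsRChainFin r E f ∧ f p.1 ∈ adjEdges E (g p.2)}.ncard := by
        refine Set.ncard_le_sum_of_subset_iUnion (fun _ => finite_setOf_isRChainFin_and _) ?_
        rintro f ⟨hf, -, i, j, hij⟩
        obtain ⟨k, hk⟩ := hf.exists_mem_adjEdges hr hE hn (hg.1 j) (by rwa [inter_comm] at hij)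
        exact Set.mem_iUnion.2 ⟨(k, j), hf, (mem_adjEdges_comm (hf.1 k) (hg.1 j)).1 hk⟩
    _ ≤ ∑ _p : Fin r × Fin r, D ^ r :=
        sum_le_sum fun p _ => ncard_isRChainFin_apply_mem_le hE hn hadj p.1 (hadj _ (hg.1 p.2))
    _ = r ^ 2 * D ^ r := by simp [sq]

theorem ncard_chains_meeting_edge_le_of_card_le_one (hr : 0 < r) (hE : ∀ e ∈ E, e.card ≤ 1)
    (hadj : ∀ e ∈ E, (adjEdges E e).card ≤ D) (he : e ∈ E) :
    {f : Fin r → Finset V | IsRChainFin r E f ∧ ∃ i, (e ∩ f i).Nonempty}.ncard ≤ D + 1 := by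
  calc _ ≤ {f | IsRChainFin r E f ∧ f ⟨0, hr⟩ ∈ insert e (adjEdges E e)}.ncard := by
        refine Set.ncard_le_ncard ?_ (finite_setOf_isRChainFin_and _)
        rintro f ⟨hf, i, hi⟩
        rw [hf.apply_eq_apply hE i ⟨0, hr⟩] at hi
        exact ⟨hf, mem_insert_adjEdges (hf.1 _) hi⟩
    _ ≤ (insert e (adjEdges E e)).card := ncard_isRChainFin_apply_mem_le_card hE _ _
    _ ≤ D + 1 := (card_insert_le _ _).trans (Nat.add_le_add_right (hadj e he) 1)

theorem ncard_edges_meeting_chain_le_of_card_le_one (hr : 0 < r) (hE : ∀ e ∈ E, e.card ≤ 1)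
    (hadj : ∀ e ∈ E, (adjEdges E e).card ≤ D) (hg : IsRChainFin r E g) :
    {x | x ∈ E ∧ ∃ i, (x ∩ g i).Nonempty}.ncard ≤ D + 1 := by
  calc _ ≤ ((insert (g ⟨0, hr⟩) (adjEdges E (g ⟨0, hr⟩)) : Finset _) : Set (Finset V)).ncard := by
        refine Set.ncard_le_ncard ?_ (finite_toSet _)
        rintro x ⟨hx, i, hi⟩
        rw [hg.apply_eq_apply hE i ⟨0, hr⟩, inter_comm] at hi
        exact mem_insert_adjEdges hx hi
    _ ≤ D + 1 := by
        rw [Set.ncard_coe_finset]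
        exact (card_insert_le _ _).trans (Nat.add_le_add_right (hadj _ (hg.1 _)) 1)

theorem ncard_chains_meeting_chain_le_of_card_le_one (hr : 0 < r) (hE : ∀ e ∈ E, e.card ≤ 1)
    (hadj : ∀ e ∈ E, (adjEdges E e).card ≤ D) (hg : IsRChainFin r E g) :
    {f : Fin r → Finset V | IsRChainFin r E f ∧ f ≠ g ∧
      ∃ i j, (f i ∩ g j).Nonempty}.ncard ≤ D := by
  calc _ ≤ {f | IsRChainFin r E f ∧ f ⟨0, hr⟩ ∈ adjEdges E (g ⟨0, hr⟩)}.ncard := by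
        refine Set.ncard_le_ncard ?_ (finite_setOf_isRChainFin_and _)
        rintro f ⟨hf, hfg, i, j, hij⟩
        rw [hf.apply_eq_apply hE i ⟨0, hr⟩, hg.apply_eq_apply hE j ⟨0, hr⟩, inter_comm] at hij
        refine ⟨hf, mem_adjEdges.2 ⟨hf.1 _, fun h0 => hfg (funext fun k => ?_), hij⟩⟩
        rw [hf.apply_eq_apply hE k ⟨0, hr⟩, hg.apply_eq_apply hE k ⟨0, hr⟩, h0]
    _ ≤ D := (ncard_isRChainFin_apply_mem_le_card hE _ _).trans (hadj _ (hg.1 _))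

end Counting

/-- In an `n`-uniform hypergraph in which every edge intersects at most `D ≥ 1`
other edges: (i) every edge intersects at most `r·D^r` `r`-chains; (ii) every
`r`-chain intersects at most `r·D` edges; (iii) every `r`-chain intersects at
most `r²·D^r` other `r`-chains.  (An edge intersects a chain if it intersects
some edge of the chain; two chains intersect if some edge of one intersects
some edge of the other.) -/
theorem chain_counting (r n D : ℕ) (hr : 2 ≤ r) (hD : 1 ≤ D)
    (V : Type) [DecidableEq V] (E : Finset (Finset V)) (hE : ∀ e ∈ E, e.card = n)
    (hdeg : ∀ e ∈ E, {f | f ∈ E ∧ f ≠ e ∧ (e ∩ f).Nonempty}.ncard ≤ D) :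
    (∀ e ∈ E,
      {f : Fin r → Finset V | IsRChainFin r E f ∧ ∃ i, (e ∩ f i).Nonempty}.ncard
        ≤ r * D ^ r) ∧
    (∀ g : Fin r → Finset V, IsRChainFin r E g →
      {e | e ∈ E ∧ ∃ i, (e ∩ g i).Nonempty}.ncard ≤ r * D) ∧
    (∀ g : Fin r → Finset V, IsRChainFin r E g →
      {f : Fin r → Finset V | IsRChainFin r E f ∧ f ≠ g ∧
        ∃ i j, (f i ∩ g j).Nonempty}.ncard ≤ r ^ 2 * D ^ r) := by
  have hadj : ∀ e ∈ E, (adjEdges E e).card ≤ D := fun e he => by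
    rw [← Set.ncard_coe_finset, coe_adjEdges]
    exact hdeg e he
  rcases le_or_gt 2 n with hn | hn
  · exact ⟨fun e he => ncard_chains_meeting_edge_le_of_two_le hr hE hn hadj he,
      fun g hg => ncard_edges_meeting_chain_le_of_two_le hr hE hn hadj hg,
      fun g hg => ncard_chains_meeting_chain_le_of_two_le hr hE hn hadj hg⟩
  · have hE₁ : ∀ e ∈ E, e.card ≤ 1 := fun e he => (hE e he).trans_le (by omega)
    have hr₀ : 0 < r := by omega
    have hDr : D ≤ D ^ r := le_self_pow hD (by omega)
    refine ⟨fun e he => ?_, fun g hg => ?_, fun g hg => ?_⟩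
    · calc _ ≤ D + 1 := ncard_chains_meeting_edge_le_of_card_le_one hr₀ hE₁ hadj he
        _ ≤ r * D ^ r := by nlinarith
    · calc _ ≤ D + 1 := ncard_edges_meeting_chain_le_of_card_le_one hr₀ hE₁ hadj hg
        _ ≤ r * D := by nlinarith
    · calc _ ≤ D := ncard_chains_meeting_chain_le_of_card_le_one hr₀ hE₁ hadj hg
        _ ≤ r ^ 2 * D ^ r := hDr.trans (Nat.le_mul_of_pos_left _ (by positivity))
end
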